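/- arXiv:1012.4338 — 14 statements merged into one kernel-verified Lean document; each statement's English description precedes it below -/
import Mathlib

section
/- If U is an f-quasi-selective ultrafilter on ℕ, then the pushforward ultrafilter f(U) is quasi-selective. -/
def Nonprincipal (U : Ultrafilter ℕ) : Prop := ∀ A : Set ℕ, A.Finite → A ∉ U

def UnboundedModU (U : Ultrafilter ℕ) (f : ℕ → ℕ) : Prop := ∀ n : ℕ, {x | n < f x} ∈ U

def NondecrModU (U : Ultrafilter ℕ) (g : ℕ → ℕ) : Prop :=
  ∃ A ∈ U, ∀ x ∈ A, ∀ y ∈ A, x ≤ y → g x ≤ g y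

def QSfor (U : Ultrafilter ℕ) (f : ℕ → ℕ) : Prop :=
  ∀ g : ℕ → ℕ, {x | g x ≤ f x} ∈ U → NondecrModU U g

def Selective (U : Ultrafilter ℕ) : Prop := ∀ g : ℕ → ℕ, NondecrModU U g

def Rapid (U : Ultrafilter ℕ) : Prop :=
  ∀ g : ℕ → ℕ, StrictMono g → ∃ A ∈ U, ∀ n, 1 ≤ n → (A ∩ Set.Iic (g n)).ncard < n

def WeaklyRamsey (U : Ultrafilter ℕ) : Prop :=
  ∀ (k : ℕ) (c : ℕ → ℕ → Fin k), ∃ A ∈ U, ∃ i j : Fin k,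
    ∀ x ∈ A, ∀ y ∈ A, x < y → c x y = i ∨ c x y = j

def leU (U : Ultrafilter ℕ) (f g : ℕ → ℕ) : Prop := {x | f x ≤ g x} ∈ U

def QPoint (U : Ultrafilter ℕ) : Prop :=
  ∀ p : ℕ → ℕ, p 0 = 0 → StrictMono p →
    ∃ A ∈ U, ∀ n, (A ∩ Set.Ico (p n) (p (n+1))).Subsingleton

theorem stmt0 (U : Ultrafilter ℕ) (f : ℕ → ℕ)
    (hNP : Nonprincipal U) (hUnb : UnboundedModU U f)
    (hQS : QSfor U f) : QSfor (Ultrafilter.map f U) id := by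
  intro g hg
  rw [Ultrafilter.mem_map] at hg
  obtain ⟨B, hB, hBm⟩ := hQS (g ∘ f) hg
  obtain ⟨C, hC, hCm⟩ := hQS f (by simp only [le_refl, Set.setOf_true]; exact Filter.univ_mem)
  refine ⟨f '' (B ∩ C), ?_, ?_⟩
  · rw [Ultrafilter.mem_map]
    exact Filter.mem_of_superset (Filter.inter_mem hB hC)
      (Set.subset_preimage_image f _)
  · rintro y₁ ⟨x₁, ⟨hx₁B, hx₁C⟩, rfl⟩ y₂ ⟨x₂, ⟨hx₂B, hx₂C⟩, rfl⟩ hle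
    rcases le_total x₁ x₂ with h | h
    · exact hBm x₁ hx₁B x₂ hx₂B h
    · have : f x₂ ≤ f x₁ := hCm x₂ hx₂C x₁ hx₁C h
      have heq : f x₁ = f x₂ := le_antisymm hle this
      simp [heq]
end

section
/- If f is increasing on some set of the ultrafilter U, then U is (g ∘ f)-quasi-selective if and only if the pushforward f(U) is g-quasi-selective. -/
theorem stmt1 (U : Ultrafilter ℕ) (f g : ℕ → ℕ)
    (hNP : Nonprincipal U) (hUnb : UnboundedModU U f)
    (hInc : ∃ A ∈ U, ∀ x ∈ A, ∀ y ∈ A, x < y → f x < f y) :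
    QSfor U (g ∘ f) ↔ QSfor (Ultrafilter.map f U) g := by
  obtain ⟨A, hA, hAinc⟩ := hInc
  have hmono : ∀ x ∈ A, ∀ y ∈ A, x ≤ y → f x ≤ f y := by
    intro x hx y hy hxy
    rcases eq_or_lt_of_le hxy with rfl | h
    · exact le_rfl
    · exact (hAinc x hx y hy h).le
  have hinj : ∀ x ∈ A, ∀ y ∈ A, f x = f y → x = y := by
    intro x hx y hy hfeq
    rcases lt_trichotomy x y with h | h | h
    · exact absurd hfeq (hAinc x hx y hy h).ne
    · exact h
    · exact absurd hfeq.symm (hAinc y hy x hx h).ne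
  constructor
  · intro hQS h hh
    rw [Ultrafilter.mem_map] at hh
    obtain ⟨B, hB, hBmono⟩ := hQS (h ∘ f) hh
    refine ⟨f '' (A ∩ B), ?_, ?_⟩
    · rw [Ultrafilter.mem_map]
      exact Filter.mem_of_superset (Filter.inter_mem hA hB) (Set.subset_preimage_image f _)
    · rintro u ⟨x, ⟨hxA, hxB⟩, rfl⟩ v ⟨y, ⟨hyA, hyB⟩, rfl⟩ huv
      have hxy : x ≤ y := by
        by_contra hxy
        push_neg at hxy
        exact absurd huv (not_le.mpr (hAinc y hyA x hxA hxy))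
      exact hBmono x hxB y hyB hxy
  · intro hQS k hk
    set S := A ∩ {x | k x ≤ g (f x)} with hS
    have hSU : S ∈ U := Filter.inter_mem hA hk
    classical
    set h : ℕ → ℕ := fun v => if hv : ∃ x, x ∈ S ∧ f x = v then k hv.choose else 0 with hhdef
    have hhS : ∀ x ∈ S, h (f x) = k x := by
      intro x hx
      have hv : ∃ x', x' ∈ S ∧ f x' = f x := ⟨x, hx, rfl⟩
      simp only [hhdef, dif_pos hv]
      have hspec := hv.choose_spec
      rw [hinj _ hspec.1.1 _ hx.1 hspec.2]
    have hmem : {v | h v ≤ g v} ∈ Ultrafilter.map f U := by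
      rw [Ultrafilter.mem_map]
      apply Filter.mem_of_superset hSU
      intro x hx
      simp only [Set.mem_preimage, Set.mem_setOf_eq]
      rw [hhS x hx]
      exact hx.2
    obtain ⟨C, hC, hCmono⟩ := hQS h hmem
    rw [Ultrafilter.mem_map] at hC
    refine ⟨S ∩ f ⁻¹' C, Filter.inter_mem hSU hC, ?_⟩
    rintro x ⟨hxS, hxC⟩ y ⟨hyS, hyC⟩ hxy
    have hc := hCmono (f x) hxC (f y) hyC (hmono x hxS.1 y hyS.1 hxy)
    rwa [hhS x hxS, hhS y hyS] at hc
end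

section
/- If f is increasing on some set of the ultrafilter U, then U is f-quasi-selective if and only if the pushforward f(U) is quasi-selective. -/
theorem stmt2 (U : Ultrafilter ℕ) (f : ℕ → ℕ)
    (hNP : Nonprincipal U)
    (hInc : ∃ A ∈ U, ∀ x ∈ A, ∀ y ∈ A, x < y → f x < f y) :
    QSfor U f ↔ QSfor (Ultrafilter.map f U) id := by
  classical
  obtain ⟨A, hAU, hA⟩ := hInc
  have hinj : ∀ x ∈ A, ∀ y ∈ A, f x = f y → x = y := by
    intro x hx y hy hxy
    rcases lt_trichotomy x y with h | h | h
    · exact absurd hxy (hA x hx y hy h).ne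
    · exact h
    · exact absurd hxy.symm (hA y hy x hx h).ne
  constructor
  · intro hQS g hg
    have hg' : {x | (g ∘ f) x ≤ f x} ∈ U := by
      have := Ultrafilter.mem_map.mp hg
      exact this
    obtain ⟨B, hBU, hB⟩ := hQS (g ∘ f) hg'
    refine ⟨f '' (B ∩ A), ?_, ?_⟩
    · rw [Ultrafilter.mem_map]
      exact Filter.mem_of_superset (Filter.inter_mem hBU hAU)
        (fun x hx => ⟨x, hx, rfl⟩)
    · rintro _ ⟨x, ⟨hxB, hxA⟩, rfl⟩ _ ⟨y, ⟨hyB, hyA⟩, rfl⟩ hle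
      rcases eq_or_lt_of_le hle with h | h
      · rw [hinj x hxA y hyA h]
      · have hxy : x < y := by
          by_contra hc
          push_neg at hc
          rcases eq_or_lt_of_le hc with h' | h'
          · exact h.ne (by rw [h'])
          · exact absurd h (not_lt.2 (hA y hyA x hxA h').le)
        exact hB x hxB y hyB hxy.le
  · intro hQS g hg
    set invf : ℕ → ℕ := fun y => if h : ∃ x ∈ A, f x = y then h.choose else 0 with hinvf
    have hinv : ∀ x ∈ A, invf (f x) = x := by
      intro x hx
      have hex : ∃ x' ∈ A, f x' = f x := ⟨x, hx, rfl⟩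
      simp only [hinvf, dif_pos hex]
      obtain ⟨hx', hfx'⟩ := hex.choose_spec
      exact hinj _ hx' x hx hfx'
    have hmem : {y | (g ∘ invf) y ≤ id y} ∈ Ultrafilter.map f U := by
      rw [Ultrafilter.mem_map]
      refine Filter.mem_of_superset (Filter.inter_mem hg hAU) ?_
      rintro x ⟨hx1, hx2⟩
      simp only [Set.mem_preimage, Set.mem_setOf_eq, Function.comp, hinv x hx2, id]
      exact hx1
    obtain ⟨D, hDU, hD⟩ := hQS (g ∘ invf) hmem
    rw [Ultrafilter.mem_map] at hDU
    refine ⟨f ⁻¹' D ∩ A, Filter.inter_mem hDU hAU, ?_⟩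
    rintro x ⟨hxD, hxA⟩ y ⟨hyD, hyA⟩ hle
    rcases eq_or_lt_of_le hle with rfl | h'
    · exact le_refl _
    · have := hD (f x) hxD (f y) hyD (hA x hxA y hyA h').le
      simpa [Function.comp, hinv x hxA, hinv y hyA] using this
end

section
/- Let U be an ultrafilter on ℕ that is f-quasi-selective for some nondecreasing unbounded f, and let ⟨X_n⟩ be a partition of ℕ with no part belonging to U. Then there exists an interval partition ⟨Y_m⟩ of ℕ and a set A ∈ U such that for every n there is m with X_n ∩ A ⊆ Y_m. -/
theorem stmt3 (U : Ultrafilter ℕ) (f : ℕ → ℕ) (X : ℕ → Set ℕ)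
    (hNP : Nonprincipal U) (hf : Monotone f) (hUnb : ∀ n, ∃ x, n < f x)
    (hQS : QSfor U f)
    (hPart : ∀ x : ℕ, ∃! n, x ∈ X n) (hXU : ∀ n, X n ∉ U) :
    ∃ y : ℕ → ℕ, y 0 = 0 ∧ StrictMono y ∧
      ∃ A ∈ U, ∀ n, ∃ m, X n ∩ A ⊆ Set.Ico (y m) (y (m+1)) := by
  classical
  have _inst : ∀ p : ℕ → Prop, DecidablePred p := fun p => Classical.decPred p
  -- index of the part containing x
  let idx : ℕ → ℕ := fun x => (hPart x).choose
  have hmem : ∀ x, x ∈ X (idx x) := fun x => (hPart x).choose_spec.1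
  have huniq : ∀ x k, x ∈ X k → k = idx x := fun x k hk => (hPart x).choose_spec.2 k hk
  -- g x = min of the part containing x
  let g : ℕ → ℕ := fun x => sInf (X (idx x))
  have hgle : ∀ x, g x ≤ x := fun x => Nat.sInf_le (hmem x)
  let h : ℕ → ℕ := fun x => f (g x)
  have hgX : ∀ k, ∀ x ∈ X k, g x = sInf (X k) := by
    intro k x hx
    have hk := huniq x k hx
    simp only [g]
    rw [← hk]
  -- fibers of g are not in U
  have hfib : ∀ μ, {x | g x = μ} ∉ U := by
    intro μ hU
    obtain ⟨x₀, hx₀⟩ := Filter.nonempty_of_mem (f := (U : Filter ℕ)) hU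
    have key : ∀ x, g x = μ → idx x = idx x₀ := by
      intro x hx
      have h1 : μ ∈ X (idx x) := by
        have := Nat.sInf_mem (⟨x, hmem x⟩ : (X (idx x)).Nonempty)
        rwa [show sInf (X (idx x)) = μ from hx] at this
      have h2 : μ ∈ X (idx x₀) := by
        have := Nat.sInf_mem (⟨x₀, hmem x₀⟩ : (X (idx x₀)).Nonempty)
        rwa [show sInf (X (idx x₀)) = μ from hx₀] at this
      exact (huniq μ _ h1).trans (huniq μ _ h2).symm
    have hsub : {x | g x = μ} ⊆ X (idx x₀) := by
      intro x hx
      have := key x hx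
      rw [← this]
      exact hmem x
    exact hXU (idx x₀) (Filter.mem_of_superset hU hsub)
  -- sublevel sets of g are not in U
  have hlt : ∀ T, {x | g x < T} ∉ U := by
    intro T
    induction T with
    | zero =>
      have : {x : ℕ | g x < 0} = ∅ := by ext x; simp
      rw [this]
      exact Filter.empty_notMem _
    | succ T ih =>
      intro hU
      have hsplit : {x | g x < T} ∪ {x | g x = T} ∈ U := by
        refine Filter.mem_of_superset hU ?_
        intro x hx
        rcases Nat.lt_succ_iff_lt_or_eq.mp hx with hh | hh
        · exact Or.inl hh
        · exact Or.inr hh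
      rcases (Ultrafilter.union_mem_iff).mp hsplit with hh | hh
      · exact ih hh
      · exact hfib T hh
  -- sublevel sets of h are not in U
  have hhle : ∀ c, {x | h x ≤ c} ∉ U := by
    intro c hU
    obtain ⟨T, hT⟩ := hUnb c
    refine hlt T (Filter.mem_of_superset hU ?_)
    intro x hx
    show g x < T
    by_contra hge
    push_neg at hge
    have h1 : f T ≤ f (g x) := hf hge
    have h2 : f (g x) ≤ c := hx
    omega
  -- apply quasi-selectivity to h
  obtain ⟨A, hA, hmono⟩ := hQS h (Filter.univ_mem' (fun x => hf (hgle x)))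
  have hAinf : A.Infinite := fun hfinA => hNP A hfinA hA
  -- sublevel sets of h intersected with A are finite
  have hfin : ∀ c, (A ∩ {x | h x ≤ c}).Finite := by
    intro c
    by_contra hinf
    have hinf : (A ∩ {x | h x ≤ c}).Infinite := hinf
    refine hhle c (Filter.mem_of_superset hA ?_)
    intro x hx
    obtain ⟨z, hz, hxz⟩ := hinf.exists_gt x
    exact le_trans (hmono x hx z hz.1 (le_of_lt hxz)) hz.2
  -- E c = 1 + max of the finite set A ∩ {h ≤ c} (0 if empty)
  let E : ℕ → ℕ := fun c => (hfin c).toFinset.sup (fun x => x + 1)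
  have hElt : ∀ c x, x ∈ A → h x ≤ c → x < E c := by
    intro c x hxA hxc
    have hx : x ∈ (hfin c).toFinset := by
      rw [Set.Finite.mem_toFinset]
      exact ⟨hxA, hxc⟩
    exact Finset.le_sup (f := fun x => x + 1) hx
  have hEle : ∀ c x, (∀ z, z ∈ A → h z ≤ c → z < x) → E c ≤ x := by
    intro c x hz
    refine Finset.sup_le ?_
    intro b hb
    rw [Set.Finite.mem_toFinset] at hb
    exact hz b hb.1 hb.2
  have hEmono : Monotone E := by
    intro c c' hcc
    refine Finset.sup_mono ?_
    intro b hb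
    rw [Set.Finite.mem_toFinset] at hb ⊢
    exact ⟨hb.1, le_trans hb.2 hcc⟩
  have hEunb : ∀ b, ∃ c, b < E c := by
    intro b
    obtain ⟨a, ha, hba⟩ := hAinf.exists_gt b
    exact ⟨h a, lt_trans hba (hElt (h a) a ha le_rfl)⟩
  -- the interval partition
  let y : ℕ → ℕ := fun m => Nat.rec 0 (fun _ prev => E (sInf {c | prev < E c})) m
  have hy0 : y 0 = 0 := rfl
  have hysucc : ∀ m, y (m + 1) = E (sInf {c | y m < E c}) := fun m => rfl
  have hylt : ∀ m, y m < y (m + 1) := by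
    intro m
    rw [hysucc]
    exact Nat.sInf_mem (hEunb (y m))
  have hymono : StrictMono y := strictMono_nat_of_lt_succ hylt
  refine ⟨y, hy0, hymono, A, hA, ?_⟩
  intro n
  by_cases hne : (X n ∩ A).Nonempty
  · obtain ⟨x₀, hx₀X, hx₀A⟩ := hne
    -- h is constant on X n, with value c := h x₀
    have hgconst : ∀ x ∈ X n, g x = g x₀ :=
      fun x hx => (hgX n x hx).trans (hgX n x₀ hx₀X).symm
    have hconst : ∀ x ∈ X n, h x = h x₀ := fun x hx => congrArg f (hgconst x hx)
    -- upper bound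
    have hupper : ∀ x ∈ X n ∩ A, x < E (h x₀) := by
      intro x hx
      exact hElt _ x hx.2 (le_of_eq (hconst x hx.1))
    -- lower bound
    set q : ℕ := if h x₀ = 0 then 0 else E (h x₀ - 1) with hq
    have hlower : ∀ x ∈ X n ∩ A, q ≤ x := by
      intro x hx
      rw [hq]
      split_ifs with hc0
      · exact Nat.zero_le x
      · refine hEle _ x ?_
        intro z hzA hzc
        by_contra hzx
        push_neg at hzx
        have := hmono x hx.2 z hzA hzx
        have hxc : h x = h x₀ := hconst x hx.1
        omega
    have hqlt : q < E (h x₀) := lt_of_le_of_lt (hlower x₀ ⟨hx₀X, hx₀A⟩) (hupper x₀ ⟨hx₀X, hx₀A⟩)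
    -- find m with y m ≤ q < y (m+1)
    have hex : {k | q < y k}.Nonempty := by
      refine ⟨q + 1, lt_of_lt_of_le (Nat.lt_succ_self q) ?_⟩
      exact hymono.le_apply
    have hk : q < y (sInf {k | q < y k}) := Nat.sInf_mem hex
    have hkpos : sInf {k | q < y k} ≠ 0 := by
      intro h0
      rw [h0, hy0] at hk
      omega
    obtain ⟨m, hkm⟩ := Nat.exists_eq_succ_of_ne_zero hkpos
    rw [hkm] at hk
    have hym : y m ≤ q := by
      have hnot := Nat.notMem_of_lt_sInf (s := {k | q < y k}) (show m < sInf {k | q < y k} by omega)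
      simpa using hnot
    -- key: y (m+1) ≥ E (h x₀)
    have hy1 : E (h x₀) ≤ y (m + 1) := by
      rw [hysucc]
      set d := sInf {c | y m < E c} with hd
      rcases Nat.eq_zero_or_pos (h x₀) with hc0 | hcpos
      · rw [hc0]
        exact hEmono (Nat.zero_le d)
      · have hqE : q = E (h x₀ - 1) := by
          rw [hq, if_neg (by omega)]
        have hEd : q < E d := by
          have := hk
          rw [hysucc] at this
          exact this
        have hdgt : h x₀ - 1 < d := by
          by_contra hdle
          push_neg at hdle
          have := hEmono hdle
          rw [← hqE] at this
          omega
        have : h x₀ ≤ d := by omega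
        exact hEmono this
    refine ⟨m, ?_⟩
    intro x hx
    exact ⟨le_trans hym (hlower x hx), lt_of_lt_of_le (hupper x hx) hy1⟩
  · rw [Set.not_nonempty_iff_eq_empty] at hne
    exact ⟨0, by rw [hne]; exact Set.empty_subset _⟩
end

section
/- Every ultrafilter on ℕ that is f-quasi-selective for some nondecreasing unbounded f : ℕ → ℕ is a P-point: every function ℕ → ℕ is either constant on a set of U or finite-to-one on a set of U. -/
lemma cofinite_mem {U : Ultrafilter ℕ} (hNP : Nonprincipal U) {A : Set ℕ}
    (hA : Aᶜ.Finite) : A ∈ U := by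
  have := hNP Aᶜ hA
  rwa [Ultrafilter.compl_notMem_iff] at this

theorem stmt4 (U : Ultrafilter ℕ) (f : ℕ → ℕ)
    (hNP : Nonprincipal U) (hf : Monotone f) (hUnb : ∀ n, ∃ x, n < f x)
    (hQS : QSfor U f) (h : ℕ → ℕ) :
    (∃ A ∈ U, ∀ x ∈ A, ∀ y ∈ A, h x = h y) ∨
    (∃ A ∈ U, ∀ n, (A ∩ h ⁻¹' {n}).Finite) := by
  set g : ℕ → ℕ := fun x => min (h x) (f x) with hg
  have hfbig : ∀ c : ℕ, {x | c < f x} ∈ U := by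
    intro c
    obtain ⟨x0, hx0⟩ := hUnb c
    apply cofinite_mem hNP
    apply Set.Finite.subset (Set.finite_Iio x0)
    intro x hx
    simp only [Set.mem_compl_iff, Set.mem_setOf_eq, not_lt] at hx
    by_contra hxx
    simp only [Set.mem_Iio, not_lt] at hxx
    exact absurd (lt_of_lt_of_le hx0 (hf hxx)) (not_lt.2 hx)
  obtain ⟨A, hAU, hAmono⟩ := hQS g (by
    have : {x | g x ≤ f x} = Set.univ := by
      ext x; simp [hg, min_le_right]
    rw [this]; exact Filter.univ_mem)
  by_cases hc : ∃ c, {x ∈ A | g x = c} ∈ U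
  · -- constant case
    obtain ⟨c, hcU⟩ := hc
    left
    refine ⟨{x ∈ A | g x = c} ∩ {x | c < f x}, Filter.inter_mem hcU (hfbig c), ?_⟩
    intro x hx y hy
    have hx' : h x = c := by
      have h1 : min (h x) (f x) = c := hx.1.2
      have h2 : c < f x := hx.2
      omega
    have hy' : h y = c := by
      have h1 : min (h y) (f y) = c := hy.1.2
      have h2 : c < f y := hy.2
      omega
    rw [hx', hy']
  · -- finite-to-one case
    push_neg at hc
    right
    refine ⟨A, hAU, ?_⟩
    have hfin : ∀ m, {x ∈ A | g x = m}.Finite := by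
      intro m
      by_contra hinf
      replace hinf : ({x ∈ A | g x = m}).Infinite := hinf
      obtain ⟨s, hsA, hsm⟩ := hinf.nonempty
      apply hc m
      have hsub : A ∩ Set.Ici s ⊆ {x ∈ A | g x = m} := by
        rintro x ⟨hxA, hxs⟩
        refine ⟨hxA, le_antisymm ?_ ?_⟩
        · obtain ⟨b, ⟨hbA, hbm⟩, hxb⟩ := hinf.exists_gt x
          calc g x ≤ g b := hAmono x hxA b hbA hxb.le
            _ = m := hbm
        · calc m = g s := hsm.symm
            _ ≤ g x := hAmono s hsA x hxA hxs
      exact U.mem_of_superset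
        (Filter.inter_mem hAU (cofinite_mem hNP (by simpa using Set.finite_Iio s))) hsub
    intro n
    apply Set.Finite.subset
      (Set.Finite.biUnion (Set.finite_Iic n) (fun m _ => hfin m))
    rintro x ⟨hxA, hxh⟩
    simp only [Set.mem_preimage, Set.mem_singleton_iff] at hxh
    refine Set.mem_biUnion (show g x ∈ Set.Iic n by
      simp only [Set.mem_Iic, hg]; omega) ⟨hxA, rfl⟩
end

section
/- If U is f-quasi-selective for some 1-1 function f, then every function ℕ → ℕ that is non-constant modulo U is interval-to-one modulo U, i.e., agrees on a set of U with a function g such that each fiber g⁻¹(n) is a (possibly empty) interval of ℕ. -/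
theorem stmt5 (U : Ultrafilter ℕ) (f : ℕ → ℕ)
    (hNP : Nonprincipal U) (hf : Function.Injective f) (hQS : QSfor U f)
    (h : ℕ → ℕ) (hnc : ¬ ∃ A ∈ U, ∀ x ∈ A, ∀ y ∈ A, h x = h y) :
    ∃ g : ℕ → ℕ, {x | h x = g x} ∈ U ∧ ∀ n, ∃ a b, g ⁻¹' {n} = Set.Ico a b := by
  classical
  -- Step 1: f is strictly increasing on some B ∈ U
  obtain ⟨B, hBU, hBmono⟩ := hQS f (by simp; exact Filter.univ_mem)
  have hBstrict : ∀ x ∈ B, ∀ y ∈ B, x < y → f x < f y := fun x hx y hy hxy =>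
    lt_of_le_of_ne (hBmono x hx y hy hxy.le) (fun he => hxy.ne (hf he))
  -- counting function
  have hcfin : ∀ t : ℕ, (B ∩ Set.Iio t).Finite := fun t =>
    (Set.finite_Iio t).subset Set.inter_subset_right
  have hcount_lt : ∀ s ∈ B, ∀ t, s < t →
      (B ∩ Set.Iio s).ncard < (B ∩ Set.Iio t).ncard := by
    intro s hs t hst
    apply Set.ncard_lt_ncard _ (hcfin t)
    constructor
    · exact Set.inter_subset_inter_right _ (Set.Iio_subset_Iio hst.le)
    · intro hsub
      exact absurd (hsub ⟨hs, hst⟩).2 (lt_irrefl s)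
  have hcount_inj : ∀ s ∈ B, ∀ t ∈ B,
      (B ∩ Set.Iio s).ncard = (B ∩ Set.Iio t).ncard → s = t := by
    intro s hs t ht he
    rcases lt_trichotomy s t with hlt | heq | hlt
    · exact absurd he (hcount_lt s hs t hlt).ne
    · exact heq
    · exact absurd he.symm (hcount_lt t ht s hlt).ne
  have hcount_le_f : ∀ x ∈ B, (B ∩ Set.Iio x).ncard ≤ f x := by
    intro x hx
    have himg : f '' (B ∩ Set.Iio x) ⊆ Set.Iio (f x) := by
      rintro _ ⟨y, ⟨hyB, hyx⟩, rfl⟩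
      exact hBstrict y hyB x hx hyx
    calc (B ∩ Set.Iio x).ncard = (f '' (B ∩ Set.Iio x)).ncard :=
          (Set.ncard_image_of_injective _ hf).symm
      _ ≤ (Set.Iio (f x)).ncard := Set.ncard_le_ncard himg (Set.finite_Iio _)
      _ = f x := by simp [← Finset.coe_Iio, Set.ncard_coe_finset]
  -- μ : min of h-fiber within B
  set μ : ℕ → ℕ := fun x => sInf {t | t ∈ B ∧ h t = h x} with hμdef
  have hμmem : ∀ x ∈ B, μ x ∈ B ∧ h (μ x) = h x := by
    intro x hx
    exact Nat.sInf_mem (⟨x, hx, rfl⟩ : {t | t ∈ B ∧ h t = h x}.Nonempty)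
  have hμle : ∀ x ∈ B, μ x ≤ x := fun x hx => Nat.sInf_le ⟨hx, rfl⟩
  have hμcongr : ∀ x y, h x = h y → μ x = μ y := by
    intro x y hxy
    simp only [hμdef, hxy]
  -- h' and second application of QS
  set h' : ℕ → ℕ := fun x => (B ∩ Set.Iio (μ x)).ncard with hh'def
  obtain ⟨C, hCU, hCmono⟩ := hQS h' (by
    refine Filter.mem_of_superset hBU ?_
    intro x hx
    have h1 : (B ∩ Set.Iio (μ x)).ncard ≤ (B ∩ Set.Iio x).ncard := by
      rcases lt_or_eq_of_le (hμle x hx) with hlt | heq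
      · exact (hcount_lt _ (hμmem x hx).1 _ hlt).le
      · rw [heq]
    exact le_trans h1 (hcount_le_f x hx))
  set A : Set ℕ := B ∩ C with hAdef
  have hAU : A ∈ U := (U : Filter ℕ).inter_sets hBU hCU
  have hAB : A ⊆ B := Set.inter_subset_left
  -- convexity of h-classes on A
  have hconv : ∀ x ∈ A, ∀ z ∈ A, ∀ y ∈ A, x ≤ z → z ≤ y → h x = h y → h z = h x := by
    intro x hx z hz y hy hxz hzy hxy
    have hμxy : μ x = μ y := hμcongr x y hxy
    have h1 : h' x ≤ h' z := hCmono x hx.2 z hz.2 hxz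
    have h2 : h' z ≤ h' y := hCmono z hz.2 y hy.2 hzy
    have h3 : h' x = h' y := by simp only [hh'def, hμxy]
    have h4 : h' z = h' x := le_antisymm (h3 ▸ h2) h1
    have h5 : μ z = μ x :=
      hcount_inj _ (hμmem z (hAB hz)).1 _ (hμmem x (hAB hx)).1 h4
    calc h z = h (μ z) := (hμmem z (hAB hz)).2.symm
      _ = h (μ x) := by rw [h5]
      _ = h x := (hμmem x (hAB hx)).2
  -- ν : min of h-fiber within A ; M : set of class minima
  set ν : ℕ → ℕ := fun x => sInf {t | t ∈ A ∧ h t = h x} with hνdef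
  have hνmem : ∀ x ∈ A, ν x ∈ A ∧ h (ν x) = h x := by
    intro x hx
    exact Nat.sInf_mem (⟨x, hx, rfl⟩ : {t | t ∈ A ∧ h t = h x}.Nonempty)
  have hνle : ∀ x ∈ A, ν x ≤ x := fun x hx => Nat.sInf_le ⟨hx, rfl⟩
  have hνcongr : ∀ x y, h x = h y → ν x = ν y := by
    intro x y hxy
    simp only [hνdef, hxy]
  have hνν : ∀ x ∈ A, ν (ν x) = ν x := by
    intro x hx
    exact hνcongr _ _ (hνmem x hx).2
  set M : Set ℕ := {t | t ∈ A ∧ ν t = t} with hMdef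
  have hMA : M ⊆ A := fun t ht => ht.1
  have hνM : ∀ x ∈ A, ν x ∈ M := fun x hx => ⟨(hνmem x hx).1, hνν x hx⟩
  -- h is injective on M
  have hinjM : ∀ s ∈ M, ∀ t ∈ M, h s = h t → s = t := by
    intro s hs t ht hst
    calc s = ν s := hs.2.symm
      _ = ν t := hνcongr s t hst
      _ = t := ht.2
  -- M is infinite
  have hMinf : M.Infinite := by
    intro hMfin
    have hsub : A ⊆ ⋃ t ∈ M, {x | x ∈ A ∧ h x = h t} := by
      intro x hx
      exact Set.mem_biUnion (hνM x hx) ⟨hx, ((hνmem x hx).2).symm⟩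
    have hU : (⋃ t ∈ M, {x | x ∈ A ∧ h x = h t}) ∈ U := Filter.mem_of_superset hAU hsub
    obtain ⟨t, _, htU⟩ := (Ultrafilter.finite_biUnion_mem_iff hMfin).1 hU
    exact hnc ⟨{x | x ∈ A ∧ h x = h t}, htU, fun x hx y hy => hx.2.trans hy.2.symm⟩
  have hm0 : sInf M ∈ M := Nat.sInf_mem hMinf.nonempty
  set m0 : ℕ := sInf M with hm0def
  -- next element of M
  set nxt : ℕ → ℕ := fun t => sInf {s | s ∈ M ∧ t < s} with hnxtdef
  have hnxt : ∀ t, nxt t ∈ M ∧ t < nxt t := by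
    intro t
    obtain ⟨b, hbM, hbt⟩ := hMinf.exists_gt t
    exact Nat.sInf_mem (⟨b, hbM, hbt⟩ : {s | s ∈ M ∧ t < s}.Nonempty)
  have hnxt_le : ∀ t s, s ∈ M → t < s → nxt t ≤ s := fun t s hsM hts => Nat.sInf_le ⟨hsM, hts⟩
  -- p : last element of M up to x
  set p : ℕ → ℕ := fun x => sSup (M ∩ Set.Iic x) with hpdef
  have hbdd : ∀ x : ℕ, BddAbove (M ∩ Set.Iic x) := fun x => ⟨x, fun s hs => hs.2⟩
  have hpmem : ∀ x, m0 ≤ x → p x ∈ M ∧ p x ≤ x := by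
    intro x hx
    have := Nat.sSup_mem (⟨m0, hm0, hx⟩ : (M ∩ Set.Iic x).Nonempty) (hbdd x)
    exact ⟨this.1, this.2⟩
  have hp_char : ∀ x, m0 ≤ x → ∀ t ∈ M, (p x = t ↔ t ≤ x ∧ x < nxt t) := by
    intro x hx t htM
    constructor
    · rintro rfl
      refine ⟨(hpmem x hx).2, ?_⟩
      by_contra hc
      push_neg at hc
      have h1 : nxt (p x) ≤ p x :=
        le_csSup (hbdd x) ⟨(hnxt (p x)).1, hc⟩
      exact absurd h1 (not_le.2 (hnxt (p x)).2)
    · rintro ⟨htx, hxn⟩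
      apply le_antisymm
      · refine csSup_le ⟨t, ⟨htM, htx⟩⟩ ?_
        rintro s ⟨hsM, hsx⟩
        by_contra hst
        push_neg at hst
        exact absurd (lt_of_le_of_lt hsx hxn) (not_lt.2 (hnxt_le t s hsM hst))
      · exact le_csSup (hbdd x) ⟨htM, htx⟩
  -- the interval-to-one function g
  refine ⟨fun x => h (p (max x m0)), ?_, ?_⟩
  · -- h = g on A
    refine Filter.mem_of_superset hAU ?_
    intro x hx
    have hνxM : ν x ∈ M := hνM x hx
    have hm0νx : m0 ≤ ν x := Nat.sInf_le hνxM
    have hm0x : m0 ≤ x := le_trans hm0νx (hνle x hx)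
    have hmax : max x m0 = x := max_eq_left hm0x
    have hxnxt : x < nxt (ν x) := by
      by_contra hc
      push_neg at hc
      have hs := (hnxt (ν x)).1
      have h1 : h (nxt (ν x)) = h (ν x) :=
        hconv (ν x) (hνmem x hx).1 (nxt (ν x)) (hMA hs) x hx (hnxt (ν x)).2.le hc
          ((hνmem x hx).2)
      have h2 : nxt (ν x) = ν x := hinjM _ hs _ hνxM h1
      exact absurd h2 (hnxt (ν x)).2.ne'
    have hpx : p x = ν x := (hp_char x hm0x (ν x) hνxM).2 ⟨hνle x hx, hxnxt⟩
    show h x = h (p (max x m0))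
    rw [hmax, hpx, (hνmem x hx).2]
  · -- fibers of g are intervals
    intro n
    by_cases hex : ∃ t ∈ M, h t = n
    · obtain ⟨t, htM, htn⟩ := hex
      have hgiff : ∀ x, (h (p (max x m0)) = n ↔ p (max x m0) = t) := by
        intro x
        constructor
        · intro hg
          exact hinjM _ (hpmem (max x m0) (le_max_right _ _)).1 _ htM (hg.trans htn.symm)
        · intro hp'
          rw [hp', htn]
      rcases eq_or_lt_of_le (Nat.sInf_le htM : m0 ≤ t) with heq | hlt
      · -- t = m0 : fiber is [0, nxt t)
        refine ⟨0, nxt t, ?_⟩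
        ext x
        simp only [Set.mem_preimage, Set.mem_singleton_iff, Set.mem_Ico, Nat.zero_le, true_and]
        rw [hgiff x, hp_char (max x m0) (le_max_right _ _) t htM]
        constructor
        · rintro ⟨_, h2⟩
          exact lt_of_le_of_lt (le_max_left _ _) h2
        · intro hxn
          refine ⟨heq ▸ le_max_right _ _, ?_⟩
          rcases max_cases x m0 with ⟨hm, _⟩ | ⟨hm, _⟩
          · rw [hm]; exact hxn
          · rw [hm]; exact lt_of_le_of_lt heq.le (hnxt t).2
      · -- m0 < t : fiber is [t, nxt t)
        refine ⟨t, nxt t, ?_⟩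
        ext x
        simp only [Set.mem_preimage, Set.mem_singleton_iff, Set.mem_Ico]
        rw [hgiff x, hp_char (max x m0) (le_max_right _ _) t htM]
        constructor
        · rintro ⟨h1, h2⟩
          have htx : t ≤ x := by
            rcases max_cases x m0 with ⟨hm, _⟩ | ⟨hm, hm'⟩
            · rwa [hm] at h1
            · rw [hm] at h1; exact absurd h1 (not_le.2 hlt)
          have hmax : max x m0 = x := max_eq_left (le_trans hlt.le htx)
          rw [hmax] at h2
          exact ⟨htx, h2⟩
        · rintro ⟨h1, h2⟩
          have hmax : max x m0 = x := max_eq_left (le_trans hlt.le h1)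
          rw [hmax]
          exact ⟨h1, h2⟩
    · -- value not attained on M : empty fiber
      refine ⟨0, 0, ?_⟩
      ext x
      simp only [Set.mem_preimage, Set.mem_singleton_iff, Set.Ico_self, Set.mem_empty_iff_false,
        iff_false]
      intro hg
      exact hex ⟨p (max x m0), (hpmem (max x m0) (le_max_right _ _)).1, hg⟩
end

section
/- If a nonprincipal ultrafilter U on ℕ is both rapid and f-quasi-selective for some f unbounded modulo U, then U is selective. -/
/-- interval index of `x` w.r.t. the partition given by `p`. -/
def idx (p : ℕ → ℕ) (x : ℕ) : ℕ := Nat.findGreatest (fun k => p k ≤ x) x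

/-- number of elements of `D` above `x` in the same interval. -/
noncomputable def cnt (D : Set ℕ) (p : ℕ → ℕ) (x : ℕ) : ℕ :=
  (D ∩ Set.Ioo x (p (idx p x + 1))).ncard

lemma idx_le {p : ℕ → ℕ} (hp0 : p 0 = 0) (x : ℕ) : p (idx p x) ≤ x := by
  have h := Nat.findGreatest_spec (P := fun k => p k ≤ x) (Nat.zero_le x)
    (by simp [hp0])
  exact h

lemma idx_ge {p : ℕ → ℕ} (hmono : StrictMono p) {k x : ℕ} (h : p k ≤ x) : k ≤ idx p x :=
  Nat.le_findGreatest (le_trans hmono.le_apply h) h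

lemma idx_lt {p : ℕ → ℕ} (hmono : StrictMono p) (x : ℕ) : x < p (idx p x + 1) := by
  by_contra hc
  push_neg at hc
  have := idx_ge hmono hc
  omega

theorem stmt6 (U : Ultrafilter ℕ) (f : ℕ → ℕ)
    (hNP : Nonprincipal U) (hUnb : UnboundedModU U f)
    (hQS : QSfor U f) (hR : Rapid U) : Selective U := by
  intro g
  by_cases hconst : ∃ c, {x | g x = c} ∈ U
  · obtain ⟨c, hc⟩ := hconst
    refine ⟨{x | g x = c}, hc, ?_⟩
    intro x hx y hy _
    simp only [Set.mem_setOf_eq] at hx hy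
    omega
  push_neg at hconst
  have hIci : ∀ n : ℕ, Set.Ici n ∈ U := by
    intro n
    rcases U.mem_or_compl_mem (Set.Ici n) with h | h
    · exact h
    · rw [Set.compl_Ici] at h
      exact absurd h (hNP _ (Set.finite_Iio n))
  -- Step 1: quasi-selectivity applied to min(g,f); get a set where that min is nondecreasing
  obtain ⟨E, hEU, hEmono0⟩ := hQS (fun x => min (g x) (f x)) (by
    have h : {x | (fun x => min (g x) (f x)) x ≤ f x} = Set.univ := by
      ext x; simp
    rw [h]; exact Filter.univ_mem)
  have hEmono : ∀ x ∈ E, ∀ y ∈ E, x ≤ y → min (g x) (f x) ≤ min (g y) (f y) := hEmono0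
  -- fibers of min(g,f) on E are finite
  have hfib : ∀ c, {x | x ∈ E ∧ min (g x) (f x) = c}.Finite := by
    intro c
    by_contra hinf0
    have hinf : {x | x ∈ E ∧ min (g x) (f x) = c}.Infinite := hinf0
    obtain ⟨z, hz⟩ := hinf.nonempty
    obtain ⟨hzE, hzc⟩ := hz
    have hsub : E ∩ Set.Ici z ⊆ {x | min (g x) (f x) = c} := by
      rintro x ⟨hxE, hxz⟩
      obtain ⟨w, hw, hxw⟩ := hinf.exists_gt x
      have h1 := hEmono z hzE x hxE hxz
      have h2 := hEmono x hxE w hw.1 hxw.le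
      have hw2 := hw.2
      simp only [Set.mem_setOf_eq]
      omega
    have hc1 : {x | min (g x) (f x) = c} ∈ U :=
      Filter.mem_of_superset (Filter.inter_mem hEU (hIci z)) hsub
    have hc2 : {x | g x = c} ∈ U := by
      refine Filter.mem_of_superset (Filter.inter_mem hc1 (hUnb c)) ?_
      rintro x ⟨h1, h2⟩
      simp only [Set.mem_setOf_eq] at h1 h2 ⊢
      omega
    exact hconst c hc2
  -- Step 2: f nondecreasing on C, and witnesses r n of large f-values
  obtain ⟨C, hCU, hCmono⟩ := hQS f (by
    have h : {x | f x ≤ f x} = Set.univ := by ext x; simp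
    rw [h]; exact Filter.univ_mem)
  have hrex : ∀ n : ℕ, ∃ z, z ∈ C ∧ n < f z := by
    intro n
    obtain ⟨z, hz1, hz2⟩ := Filter.nonempty_of_mem (Filter.inter_mem hCU (hUnb n))
    exact ⟨z, hz1, hz2⟩
  choose r hrC hrf using hrex
  set W : Set ℕ := E ∩ C with hWdef
  have hWU : W ∈ U := Filter.inter_mem hEU hCU
  -- g has finite "sublevel" sets on W
  have hWfin : ∀ v : ℕ, {y | y ∈ W ∧ g y ≤ v}.Finite := by
    intro v
    have hsub : {y | y ∈ W ∧ g y ≤ v} ⊆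
        ⋃ c ∈ Set.Iic v, {x | x ∈ E ∧ min (g x) (f x) = c} := by
      rintro y ⟨hyW, hyv⟩
      have h1 : min (g y) (f y) ∈ Set.Iic v := le_trans (min_le_left _ _) hyv
      exact Set.mem_biUnion h1 ⟨hyW.1, rfl⟩
    exact ((Set.finite_Iic v).biUnion fun c _ => hfib c).subset hsub
  -- Step 4: build the fast partition p
  have hstep : ∀ b n : ℕ, ∃ q : ℕ, b < q ∧ r (n + 2) < q ∧
      ∀ y, y ∈ W → q ≤ y → ∀ x, x ∈ W → x < b → g x < g y := by
    intro b n
    obtain ⟨B, hB⟩ : ∃ B, ∀ x, x ∈ W → x < b → g x ≤ B := by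
      have hfin : (g '' (W ∩ Set.Iio b)).Finite :=
        ((Set.finite_Iio b).inter_of_right W).image g
      obtain ⟨B, hB⟩ := hfin.bddAbove
      exact ⟨B, fun x hx hxb => hB ⟨x, ⟨hx, hxb⟩, rfl⟩⟩
    obtain ⟨t, ht⟩ := (hWfin B).bddAbove
    refine ⟨max (max b (r (n + 2))) t + 1, by omega, by omega, ?_⟩
    intro y hyW hqy x hxW hxb
    by_contra hgy
    push_neg at hgy
    have h1 : g y ≤ B := le_trans hgy (hB x hxW hxb)
    have h2 : y ≤ t := ht ⟨hyW, h1⟩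
    omega
  choose st hst1 hst2 hst3 using hstep
  obtain ⟨p, hp0, hpsucc⟩ : ∃ p : ℕ → ℕ, p 0 = 0 ∧ ∀ n, p (n + 1) = st (p n) n :=
    ⟨fun n => Nat.rec 0 (fun k b => st b k) n, rfl, fun _ => rfl⟩
  have hpmono : StrictMono p := strictMono_nat_of_lt_succ fun n => by
    rw [hpsucc]; exact hst1 _ _
  have hpr : ∀ n, r (n + 2) < p (n + 1) := fun n => by
    rw [hpsucc]; exact hst2 _ _
  have hpkey : ∀ n y, y ∈ W → p (n + 1) ≤ y → ∀ x, x ∈ W → x < p n → g x < g y := by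
    intro n y hy hle
    rw [hpsucc] at hle
    exact hst3 _ _ y hy hle
  -- Step 5: rapidity
  obtain ⟨R, hRU, hRcard⟩ := hR (fun n => p (n + 1)) (by
    intro a b hab
    exact hpmono (show a + 1 < b + 1 by omega))
  have hRcard' : ∀ n, 1 ≤ n → (R ∩ Set.Iic (p (n + 1))).ncard < n := hRcard
  set D : Set ℕ := W ∩ R with hDdef
  have hDU : D ∈ U := Filter.inter_mem hWU hRU
  have hIicFin : ∀ n : ℕ, (R ∩ Set.Iic n).Finite := fun n =>
    (Set.finite_Iic n).inter_of_right R
  have hR2 : R ∩ Set.Iic (p 2) = ∅ := by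
    have h1 : (R ∩ Set.Iic (p 2)).ncard < 1 := hRcard' 1 le_rfl
    exact (Set.ncard_eq_zero (hIicFin (p 2))).mp (by omega)
  have hmx2 : ∀ x, x ∈ D → 2 ≤ idx p x := by
    intro x hx
    have hgt : p 2 < x := by
      by_contra hle
      push_neg at hle
      have hmem : x ∈ R ∩ Set.Iic (p 2) := ⟨hx.2, hle⟩
      rw [hR2] at hmem
      exact hmem.elim
    exact idx_ge hpmono hgt.le
  -- Step 6: cnt D p ≤ f on D
  have hHf : ∀ x, x ∈ D → cnt D p x ≤ f x := by
    intro x hx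
    have ha2 : 2 ≤ idx p x := hmx2 x hx
    obtain ⟨a, ha⟩ : ∃ a, idx p x = a + 1 := ⟨idx p x - 1, by omega⟩
    have hpa : r (idx p x + 1) < p (idx p x) := by
      rw [ha]; exact hpr a
    have hrx : r (idx p x + 1) ≤ x := le_trans hpa.le (idx_le hp0 x)
    have hfa : idx p x + 1 < f x :=
      lt_of_lt_of_le (hrf (idx p x + 1)) (hCmono _ (hrC _) x hx.1.2 hrx)
    have hsub : insert x (D ∩ Set.Ioo x (p (idx p x + 1))) ⊆
        R ∩ Set.Iic (p (idx p x + 1)) := by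
      intro z hz
      rcases Set.mem_insert_iff.mp hz with rfl | ⟨hzD, hzo⟩
      · exact ⟨hx.2, (idx_lt hpmono z).le⟩
      · exact ⟨hzD.2, hzo.2.le⟩
    have hfin2 : (D ∩ Set.Ioo x (p (idx p x + 1))).Finite :=
      (Set.finite_Ioo _ _).inter_of_right D
    have hcard := Set.ncard_le_ncard hsub (hIicFin _)
    rw [Set.ncard_insert_of_notMem (fun hc => absurd hc.2.1 (lt_irrefl x)) hfin2] at hcard
    have hlt : (R ∩ Set.Iic (p (idx p x + 1))).ncard < idx p x := hRcard' (idx p x) (by omega)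
    have heq : cnt D p x = (D ∩ Set.Ioo x (p (idx p x + 1))).ncard := rfl
    omega
  -- Step 7: quasi-selectivity applied to cnt D p
  obtain ⟨E2, hE2U, hE2mono0⟩ := hQS (cnt D p)
    (Filter.mem_of_superset hDU fun x hx => hHf x hx)
  have hE2mono : ∀ x ∈ E2, ∀ y ∈ E2, x ≤ y → cnt D p x ≤ cnt D p y := hE2mono0
  have hSU : E2 ∩ D ∈ U := Filter.inter_mem hE2U hDU
  -- Step 8: one point per interval
  have hone : ∀ x, x ∈ E2 ∩ D → ∀ y, y ∈ E2 ∩ D → x < y → idx p x ≠ idx p y := by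
    intro x hx y hy hxy heq
    have h1 : cnt D p x ≤ cnt D p y := hE2mono x hx.1 y hy.1 hxy.le
    have hsub : insert y (D ∩ Set.Ioo y (p (idx p y + 1))) ⊆
        D ∩ Set.Ioo x (p (idx p x + 1)) := by
      intro z hz
      rcases Set.mem_insert_iff.mp hz with rfl | ⟨hzD, hzo⟩
      · exact ⟨hy.2, hxy, by rw [heq]; exact idx_lt hpmono z⟩
      · exact ⟨hzD, lt_trans hxy hzo.1, by rw [heq]; exact hzo.2⟩
    have hfin2 : (D ∩ Set.Ioo x (p (idx p x + 1))).Finite :=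
      (Set.finite_Ioo _ _).inter_of_right D
    have h2 := Set.ncard_le_ncard hsub hfin2
    rw [Set.ncard_insert_of_notMem (fun hc => absurd hc.2.1 (lt_irrefl y))
      ((Set.finite_Ioo _ _).inter_of_right D)] at h2
    have h3 : cnt D p y + 1 ≤ cnt D p x := h2
    omega
  -- Step 9: parity split and conclusion
  have key : ∀ P : Set ℕ, P ∈ U →
      (∀ x, x ∈ P → ∀ y, y ∈ P → idx p x % 2 = idx p y % 2) →
      NondecrModU U g := by
    intro P hPU hPpar
    refine ⟨P ∩ (E2 ∩ D), Filter.inter_mem hPU hSU, ?_⟩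
    intro x hx y hy hxy
    rcases eq_or_lt_of_le hxy with rfl | hlt
    · exact le_rfl
    have hab : idx p x ≤ idx p y := by
      by_contra hcon
      push_neg at hcon
      have h1 : p (idx p y + 1) ≤ p (idx p x) := hpmono.monotone (by omega)
      have h2 := idx_le hp0 x
      have h3 := idx_lt hpmono y
      omega
    have hne : idx p x ≠ idx p y := hone x hx.2 y hy.2 hlt
    have hpar := hPpar x hx.1 y hy.1
    have hb2 : idx p x + 2 ≤ idx p y := by omega
    have hyp : p (idx p x + 2) ≤ y :=
      le_trans (hpmono.monotone hb2) (idx_le hp0 y)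
    have hxp : x < p (idx p x + 1) := idx_lt hpmono x
    exact (hpkey (idx p x + 1) y hy.2.2.1 hyp x hx.2.2.1 hxp).le
  rcases U.mem_or_compl_mem {x | idx p x % 2 = 0} with hP | hP
  · exact key _ hP fun x hx y hy => by
      simp only [Set.mem_setOf_eq] at hx hy; omega
  · exact key _ hP fun x hx y hy => by
      simp only [Set.mem_compl_iff, Set.mem_setOf_eq] at hx hy; omega
end

section
/- Let U be a nonprincipal ultrafilter, and let g : ℕ → ℕ be interval-to-one. Define g⁺(x) = max{y : g(y) = g(x)}. Then g is one-to-one on some set of U if and only if there is A ∈ U such that for all x < y in A, g⁺(x) < y. -/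
theorem stmt8 (U : Ultrafilter ℕ) (hNP : Nonprincipal U)
    (g gplus : ℕ → ℕ)
    (hito : ∀ n, ∃ a b, g ⁻¹' {n} = Set.Ico a b)
    (hgp : ∀ x, g (gplus x) = g x ∧ ∀ y, g y = g x → y ≤ gplus x) :
    (∃ A ∈ U, Set.InjOn g A) ↔
    (∃ A ∈ U, ∀ x ∈ A, ∀ y ∈ A, x < y → gplus x < y) := by
  constructor
  · rintro ⟨A, hA, hinj⟩
    refine ⟨A, hA, fun x hx y hy hxy => ?_⟩
    by_contra h
    push_neg at h
    -- x ≤ y ≤ gplus x, fiber is an interval, so g y = g x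
    obtain ⟨a, b, hab⟩ := hito (g x)
    have hxmem : x ∈ Set.Ico a b := by rw [← hab]; simp
    have hgpmem : gplus x ∈ Set.Ico a b := by rw [← hab]; simp [(hgp x).1]
    have hymem : y ∈ Set.Ico a b :=
      ⟨le_trans hxmem.1 hxy.le, lt_of_le_of_lt h hgpmem.2⟩
    have : g y = g x := by
      have := hab ▸ hymem; simpa using this
    exact absurd (hinj hx hy this.symm) hxy.ne
  · rintro ⟨A, hA, hsep⟩
    refine ⟨A, hA, fun x hx y hy hgxy => ?_⟩
    rcases lt_trichotomy x y with h | h | h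
    · exact absurd ((hgp x).2 y hgxy.symm) (not_le.2 (hsep x hx y hy h))
    · exact h
    · exact absurd ((hgp y).2 x hgxy) (not_le.2 (hsep y hy x hx h))
end

section
/- Let U be a nonprincipal ultrafilter on ℕ that is not a Q-point, and let f be any nondecreasing unbounded function ℕ → ℕ. Then there exists an increasing function φ : ℕ → ℕ such that the pushforward φ(U), which is isomorphic to U, is not f-quasi-selective. -/
/-!
Since `U` is not a Q-point, some interval partition `[p n, p (n+1))` has the property that every
set of `U` meets some interval twice. The function `h x := p (k + 1) - x`, for `x` in the `k`-th
interval, strictly decreases on each interval, so it is nondecreasing on no set of `U`. Choosing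
`φ` strictly increasing and so fast that `h x ≤ f (φ x)` (possible as `f` is monotone and unbounded), the
function `g` with `g ∘ φ = h` lies below `f` everywhere on the range of `φ`, yet is nondecreasing
on no set of `φ(U)`.
-/

/-- For strictly increasing `p`, the `n` with `x ∈ [p n, p (n+1))`, whenever it exists. -/
def intervalIndex (p : ℕ → ℕ) (x : ℕ) : ℕ := Nat.findGreatest (fun n => p n ≤ x) x

lemma intervalIndex_eq {p : ℕ → ℕ} (hp : StrictMono p) {x n : ℕ}
    (hlo : p n ≤ x) (hhi : x < p (n + 1)) : intervalIndex p x = n := by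
  refine Nat.findGreatest_eq_iff.mpr ⟨hp.le_apply.trans hlo, fun _ => hlo, fun m hnm _ hm => ?_⟩
  exact (hhi.trans_le (hp.monotone hnm)).not_ge hm

lemma strictAntiOn_sub_intervalIndex {p : ℕ → ℕ} (hp : StrictMono p) (n : ℕ) :
    StrictAntiOn (fun x => p (intervalIndex p x + 1) - x) (Set.Ico (p n) (p (n + 1))) := by
  intro x ⟨hxlo, hxhi⟩ y ⟨hylo, hyhi⟩ hxy
  simp only [intervalIndex_eq hp hxlo hxhi, intervalIndex_eq hp hylo hyhi]
  omega

lemma exists_strictMono_forall_le_comp {f : ℕ → ℕ} (hf : Monotone f)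
    (hUnb : ∀ n, ∃ x, n < f x) (b : ℕ → ℕ) : ∃ φ : ℕ → ℕ, StrictMono φ ∧ ∀ x, b x ≤ f (φ x) :=
  Filter.extraction_forall_of_eventually' fun n =>
    let ⟨x, hx⟩ := hUnb (b n)
    ⟨x, fun _ hk => hx.le.trans (hf hk)⟩

lemma NondecrModU.comp_of_map {U : Ultrafilter ℕ} {φ g : ℕ → ℕ} (hφ : Monotone φ)
    (hg : NondecrModU (Ultrafilter.map φ U) g) : NondecrModU U (g ∘ φ) :=
  let ⟨A, hA, hmono⟩ := hg
  ⟨φ ⁻¹' A, hA, fun x hx y hy hxy => hmono (φ x) hx (φ y) hy (hφ hxy)⟩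

lemma not_nondecrModU_of_strictAntiOn {U : Ultrafilter ℕ} {p h : ℕ → ℕ}
    (hbad : ∀ A ∈ U, ∃ n, ¬ (A ∩ Set.Ico (p n) (p (n + 1))).Subsingleton)
    (hh : ∀ n, StrictAntiOn h (Set.Ico (p n) (p (n + 1)))) : ¬ NondecrModU U h := by
  rintro ⟨A, hA, hmono⟩
  obtain ⟨n, hn⟩ := hbad A hA
  obtain ⟨x, ⟨hxA, hx⟩, y, ⟨hyA, hy⟩, hxy⟩ := (Set.not_subsingleton_iff.mp hn).exists_lt
  exact (hh n hx hy hxy).not_ge (hmono x hxA y hyA hxy.le)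

theorem stmt11_general (U : Ultrafilter ℕ) (hQ : ¬ QPoint U)
    (f : ℕ → ℕ) (hf : Monotone f) (hUnb : ∀ n, ∃ x, n < f x) :
    ∃ φ : ℕ → ℕ, StrictMono φ ∧ ¬ QSfor (Ultrafilter.map φ U) f := by
  obtain ⟨p, -, hp, hbad⟩ : ∃ p : ℕ → ℕ, p 0 = 0 ∧ StrictMono p ∧
      ∀ A ∈ U, ∃ n, ¬ (A ∩ Set.Ico (p n) (p (n + 1))).Subsingleton := by
    simpa [QPoint] using hQ
  set h : ℕ → ℕ := fun x => p (intervalIndex p x + 1) - x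
  obtain ⟨φ, hφ, hhφ⟩ := exists_strictMono_forall_le_comp hf hUnb h
  have hgφ : Function.extend φ h 0 ∘ φ = h := Function.extend_comp hφ.injective h 0
  refine ⟨φ, hφ, fun hQS => ?_⟩
  have hle : {y | Function.extend φ h 0 y ≤ f y} ∈ Ultrafilter.map φ U := by
    refine Ultrafilter.mem_map.mpr (Filter.univ_mem' fun x => ?_)
    exact (congrFun hgφ x).trans_le (hhφ x)
  refine not_nondecrModU_of_strictAntiOn hbad (strictAntiOn_sub_intervalIndex hp) ?_
  simpa only [hgφ] using (hQS _ hle).comp_of_map hφ.monotone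

theorem stmt11 (U : Ultrafilter ℕ) (hNP : Nonprincipal U) (hQ : ¬ QPoint U)
    (f : ℕ → ℕ) (hf : Monotone f) (hUnb : ∀ n, ∃ x, n < f x) :
    ∃ φ : ℕ → ℕ, StrictMono φ ∧ ¬ QSfor (Ultrafilter.map φ U) f :=
  stmt11_general U hQ f hf hUnb
end

section
/- The class of quasi-selective ultrafilters is closed under isomorphism only trivially: if there exists a quasi-selective non-selective ultrafilter U, then there is an ultrafilter isomorphic to U that is not quasi-selective. -/
theorem stmt12 (U : Ultrafilter ℕ) (hNP : Nonprincipal U)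
    (hQS : QSfor U id) (hns : ¬ Selective U) :
    ∃ φ : ℕ → ℕ, Function.Injective φ ∧ ¬ QSfor (Ultrafilter.map φ U) id := by
  rw [Selective] at hns
  push_neg at hns
  obtain ⟨g, hg⟩ := hns
  set φ : ℕ → ℕ := fun x => x + (Finset.range (x+1)).sup g with hφ
  have hmono : StrictMono φ := by
    intro a b hab
    have hsup : (Finset.range (a+1)).sup g ≤ (Finset.range (b+1)).sup g :=
      Finset.sup_mono (Finset.range_subset_range.mpr (by omega))
    simp only [hφ]
    omega
  have hinj := hmono.injective
  have hge : ∀ x, g x ≤ φ x := fun x =>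
    le_trans (Finset.le_sup (Finset.self_mem_range_succ x)) (Nat.le_add_left _ _)
  classical
  set h : ℕ → ℕ := fun n => if hn : ∃ x, φ x = n then g hn.choose else 0 with hh
  have hkey : ∀ x, h (φ x) = g x := by
    intro x
    have hex : ∃ y, φ y = φ x := ⟨x, rfl⟩
    simp only [hh, dif_pos hex]
    exact congrArg g (hinj hex.choose_spec)
  refine ⟨φ, hinj, fun hQSV => ?_⟩
  have hmem : {n | h n ≤ id n} ∈ Ultrafilter.map φ U := by
    rw [Ultrafilter.mem_map]
    have : (Set.univ : Set ℕ) ⊆ φ ⁻¹' {n | h n ≤ id n} := by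
      intro x _
      simp only [Set.mem_preimage, Set.mem_setOf_eq, id_eq, hkey x]
      exact hge x
    exact Filter.mem_of_superset Filter.univ_mem this
  obtain ⟨B, hB, hBmono⟩ := hQSV h hmem
  apply hg
  refine ⟨φ ⁻¹' B, (Ultrafilter.mem_map).mp hB, fun x hx y hy hxy => ?_⟩
  have := hBmono (φ x) hx (φ y) hy (hmono.monotone hxy)
  rwa [hkey, hkey] at this
end

section
/- Let U be a weakly Ramsey ultrafilter on ℕ that is not selective, witnessed by an interval partition ⟨[p_n, p_{n+1})⟩ with no selection set in U. Then for every f : ℕ → ℕ there exists A ∈ U such that exactly one of the following holds: (i) f is constant on A; (ii) f is increasing on A; (iii) f is constant on A ∩ [p_n, p_{n+1}) for each n and f(x) < f(y) whenever x, y ∈ A lie in different intervals with x < y; (iv) f is decreasing on A ∩ [p_n, p_{n+1}) for each n and f(x) < f(y) whenever x, y ∈ A lie in different intervals with x < y. -/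
def TypeI (f : ℕ → ℕ) (A : Set ℕ) : Prop := ∀ x ∈ A, ∀ y ∈ A, f x = f y

def TypeII (f : ℕ → ℕ) (A : Set ℕ) : Prop := ∀ x ∈ A, ∀ y ∈ A, x < y → f x < f y

def Cross (p f : ℕ → ℕ) (A : Set ℕ) : Prop :=
  ∀ x ∈ A, ∀ y ∈ A, ∀ n, x < p n → p n ≤ y → f x < f y

def TypeIII (p f : ℕ → ℕ) (A : Set ℕ) : Prop :=
  (∀ n, ∀ x ∈ A ∩ Set.Ico (p n) (p (n+1)), ∀ y ∈ A ∩ Set.Ico (p n) (p (n+1)), f x = f y) ∧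
  Cross p f A

def TypeIV (p f : ℕ → ℕ) (A : Set ℕ) : Prop :=
  (∀ n, ∀ x ∈ A ∩ Set.Ico (p n) (p (n+1)), ∀ y ∈ A ∩ Set.Ico (p n) (p (n+1)), x < y → f y < f x) ∧
  Cross p f A

open Set

def Separated (p : ℕ → ℕ) (x y : ℕ) : Prop := ∃ n, x < p n ∧ p n ≤ y

lemma Separated.lt {p : ℕ → ℕ} {x y : ℕ} (h : Separated p x y) : x < y :=
  let ⟨_, hx, hy⟩ := h; hx.trans_le hy

lemma not_separated_of_mem_Ico {p : ℕ → ℕ} (hp : Monotone p) {n x y : ℕ}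
    (hx : x ∈ Ico (p n) (p (n + 1))) (hy : y ∈ Ico (p n) (p (n + 1))) : ¬ Separated p x y := by
  rintro ⟨m, hxm, hmy⟩
  rcases le_or_gt m n with hmn | hnm
  · have := hp hmn
    have := hx.1
    omega
  · have := hp (show n + 1 ≤ m from hnm)
    have := hy.2
    omega

lemma exists_forall_separated {p : ℕ → ℕ} (hp : StrictMono p) {A : Set ℕ} (hA : A.Infinite)
    (m : ℕ) : ∃ z ∈ A, ∀ x ≤ m, Separated p x z := by
  obtain ⟨z, hz, hmz⟩ := hA.exists_gt (p (m + 1))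
  exact ⟨z, hz, fun x hx => ⟨m + 1, by have := hp.le_apply (x := m + 1); omega, hmz.le⟩⟩

lemma exists_separated_pair {p : ℕ → ℕ} (hp : StrictMono p) {A : Set ℕ} (hA : A.Infinite) :
    ∃ x ∈ A, ∃ y ∈ A, Separated p x y := by
  obtain ⟨x, hx⟩ := hA.nonempty
  obtain ⟨y, hy, hxy⟩ := exists_forall_separated hp hA x
  exact ⟨x, hx, y, hy, hxy x le_rfl⟩

lemma exists_pair_mem_Ico {p : ℕ → ℕ} {A : Set ℕ}
    (hpair : ¬ ∀ n, (A ∩ Ico (p n) (p (n + 1))).Subsingleton) :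
    ∃ n, ∃ x ∈ A ∩ Ico (p n) (p (n + 1)), ∃ y ∈ A ∩ Ico (p n) (p (n + 1)), x < y := by
  obtain ⟨n, hn⟩ := not_forall.mp hpair
  exact ⟨n, (not_subsingleton_iff.mp hn).exists_lt⟩

lemma WeaklyRamsey.exists_two_colours {U : Ultrafilter ℕ} (hU : WeaklyRamsey U) {α : Type*}
    [Finite α] (c : ℕ → ℕ → α) :
    ∃ A ∈ U, ∃ i j : α, ∀ x ∈ A, ∀ y ∈ A, x < y → c x y = i ∨ c x y = j := by
  let e := Finite.equivFin α
  obtain ⟨A, hA, i, j, hc⟩ := hU _ fun x y => e (c x y)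
  refine ⟨A, hA, e.symm i, e.symm j, fun x hx y hy hxy => ?_⟩
  simpa only [e.eq_symm_apply] using hc x hx y hy hxy

lemma exists_eq_ite_of_two_colours {β : Type*} {A : Set ℕ} {R : ℕ → ℕ → Prop} [DecidableRel R]
    {c : ℕ → ℕ → β} {i j : Bool × β}
    (hc : ∀ x ∈ A, ∀ y ∈ A, x < y → (decide (R x y), c x y) = i ∨ (decide (R x y), c x y) = j)
    (hR : ∃ x ∈ A, ∃ y ∈ A, x < y ∧ R x y) (hnR : ∃ x ∈ A, ∃ y ∈ A, x < y ∧ ¬ R x y) :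
    ∃ b b' : β, ∀ x ∈ A, ∀ y ∈ A, x < y → c x y = if R x y then b else b' := by
  obtain ⟨x₁, hx₁, y₁, hy₁, hxy₁, hR₁⟩ := hR
  obtain ⟨x₂, hx₂, y₂, hy₂, hxy₂, hR₂⟩ := hnR
  refine ⟨c x₁ y₁, c x₂ y₂, fun x hx y hy hxy => ?_⟩
  have h₁ := hc x₁ hx₁ y₁ hy₁ hxy₁
  have h₂ := hc x₂ hx₂ y₂ hy₂ hxy₂
  have h := hc x hx y hy hxy
  by_cases hRxy : R x y <;>
    rcases h₁ with rfl | rfl <;> rcases h₂ with h₂ | h₂ <;> rcases h with h | h <;>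
    simp_all [Prod.ext_iff]

open Classical in
def CompareHomogeneous (p f : ℕ → ℕ) (A : Set ℕ) (oc os : Ordering) : Prop :=
  ∀ x ∈ A, ∀ y ∈ A, x < y → compare (f x) (f y) = if Separated p x y then oc else os

namespace CompareHomogeneous

variable {p f : ℕ → ℕ} {A : Set ℕ} {oc os : Ordering}

lemma compare_of_separated (h : CompareHomogeneous p f A oc os) {x y : ℕ} (hx : x ∈ A)
    (hy : y ∈ A) (hxy : Separated p x y) : compare (f x) (f y) = oc := by
  rw [h x hx y hy hxy.lt, if_pos hxy]

lemma compare_of_mem_Ico (h : CompareHomogeneous p f A oc os) (hp : Monotone p) {n x y : ℕ}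
    (hx : x ∈ A ∩ Ico (p n) (p (n + 1))) (hy : y ∈ A ∩ Ico (p n) (p (n + 1))) (hxy : x < y) :
    compare (f x) (f y) = os := by
  rw [h x hx.1 y hy.1 hxy, if_neg (not_separated_of_mem_Ico hp hx.2 hy.2)]

lemma ne_gt (h : CompareHomogeneous p f A oc os) (hp : StrictMono p) (hA : A.Infinite) :
    oc ≠ .gt := by
  rintro rfl
  obtain ⟨x, hx, hmin⟩ := (InvImage.wf f wellFounded_lt).has_min A hA.nonempty
  obtain ⟨z, hz, hxz⟩ := exists_forall_separated hp hA x
  exact hmin z hz (compare_gt_iff_gt.mp (h.compare_of_separated hx hz (hxz x le_rfl)))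

/-- A point separated from both ends of a non-separated pair transports the equality. -/
lemma eq_of_eq (h : CompareHomogeneous p f A oc os) (hp : StrictMono p) (hA : A.Infinite)
    (hpair : ¬ ∀ n, (A ∩ Ico (p n) (p (n + 1))).Subsingleton) (hoc : oc = .eq) : os = .eq := by
  obtain ⟨n, x, hx, y, hy, hxy⟩ := exists_pair_mem_Ico hpair
  obtain ⟨z, hz, hsep⟩ := exists_forall_separated hp hA y
  have hxz := compare_eq_iff_eq.mp ((h.compare_of_separated hx.1 hz (hsep x hxy.le)).trans hoc)
  have hyz := compare_eq_iff_eq.mp ((h.compare_of_separated hy.1 hz (hsep y le_rfl)).trans hoc)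
  rw [← h.compare_of_mem_Ico hp.monotone hx hy hxy, compare_eq_iff_eq, hxz, hyz]

lemma cross_iff (h : CompareHomogeneous p f A oc os) (hp : StrictMono p) (hA : A.Infinite) :
    Cross p f A ↔ oc = .lt := by
  constructor
  · intro hcross
    obtain ⟨x, hx, y, hy, n, hxn, hny⟩ := exists_separated_pair hp hA
    rw [← h.compare_of_separated hx hy ⟨n, hxn, hny⟩, compare_lt_iff_lt]
    exact hcross x hx y hy n hxn hny
  · rintro rfl x hx y hy n hxn hny
    exact compare_lt_iff_lt.mp (h.compare_of_separated hx hy ⟨n, hxn, hny⟩)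

lemma piecewise_eq_iff (h : CompareHomogeneous p f A oc os) (hp : Monotone p)
    (hpair : ¬ ∀ n, (A ∩ Ico (p n) (p (n + 1))).Subsingleton) :
    (∀ n, ∀ x ∈ A ∩ Ico (p n) (p (n + 1)), ∀ y ∈ A ∩ Ico (p n) (p (n + 1)), f x = f y) ↔
      os = .eq := by
  constructor
  · intro hpiece
    obtain ⟨n, x, hx, y, hy, hxy⟩ := exists_pair_mem_Ico hpair
    rw [← h.compare_of_mem_Ico hp hx hy hxy, compare_eq_iff_eq]
    exact hpiece n x hx y hy
  · rintro rfl n x hx y hy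
    rcases lt_trichotomy x y with hxy | rfl | hyx
    · exact compare_eq_iff_eq.mp (h.compare_of_mem_Ico hp hx hy hxy)
    · rfl
    · exact (compare_eq_iff_eq.mp (h.compare_of_mem_Ico hp hy hx hyx)).symm

lemma piecewise_anti_iff (h : CompareHomogeneous p f A oc os) (hp : Monotone p)
    (hpair : ¬ ∀ n, (A ∩ Ico (p n) (p (n + 1))).Subsingleton) :
    (∀ n, ∀ x ∈ A ∩ Ico (p n) (p (n + 1)), ∀ y ∈ A ∩ Ico (p n) (p (n + 1)), x < y → f y < f x) ↔
      os = .gt := by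
  constructor
  · intro hpiece
    obtain ⟨n, x, hx, y, hy, hxy⟩ := exists_pair_mem_Ico hpair
    rw [← h.compare_of_mem_Ico hp hx hy hxy, compare_gt_iff_gt]
    exact hpiece n x hx y hy hxy
  · rintro rfl n x hx y hy hxy
    exact compare_gt_iff_gt.mp (h.compare_of_mem_Ico hp hx hy hxy)

lemma typeI_iff (h : CompareHomogeneous p f A oc os) (hp : StrictMono p) (hA : A.Infinite)
    (hpair : ¬ ∀ n, (A ∩ Ico (p n) (p (n + 1))).Subsingleton) :
    TypeI f A ↔ oc = .eq ∧ os = .eq := by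
  constructor
  · intro hI
    obtain ⟨x, hx, y, hy, hxy⟩ := exists_separated_pair hp hA
    obtain ⟨n, x', hx', y', hy', hxy'⟩ := exists_pair_mem_Ico hpair
    rw [← h.compare_of_separated hx hy hxy, ← h.compare_of_mem_Ico hp.monotone hx' hy' hxy',
      compare_eq_iff_eq, compare_eq_iff_eq]
    exact ⟨hI x hx y hy, hI x' hx'.1 y' hy'.1⟩
  · rintro ⟨rfl, rfl⟩ x hx y hy
    rcases lt_trichotomy x y with hxy | rfl | hyx
    · exact compare_eq_iff_eq.mp ((h x hx y hy hxy).trans (ite_self _))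
    · rfl
    · exact (compare_eq_iff_eq.mp ((h y hy x hx hyx).trans (ite_self _))).symm

lemma typeII_iff (h : CompareHomogeneous p f A oc os) (hp : StrictMono p) (hA : A.Infinite)
    (hpair : ¬ ∀ n, (A ∩ Ico (p n) (p (n + 1))).Subsingleton) :
    TypeII f A ↔ oc = .lt ∧ os = .lt := by
  constructor
  · intro hII
    obtain ⟨x, hx, y, hy, hxy⟩ := exists_separated_pair hp hA
    obtain ⟨n, x', hx', y', hy', hxy'⟩ := exists_pair_mem_Ico hpair
    rw [← h.compare_of_separated hx hy hxy, ← h.compare_of_mem_Ico hp.monotone hx' hy' hxy',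
      compare_lt_iff_lt, compare_lt_iff_lt]
    exact ⟨hII x hx y hy hxy.lt, hII x' hx'.1 y' hy'.1 hxy'⟩
  · rintro ⟨rfl, rfl⟩ x hx y hy hxy
    exact compare_lt_iff_lt.mp ((h x hx y hy hxy).trans (ite_self _))

end CompareHomogeneous

lemma exists_compareHomogeneous {U : Ultrafilter ℕ} (hNP : Nonprincipal U) (hWR : WeaklyRamsey U)
    {p : ℕ → ℕ} (hp : StrictMono p)
    (hsel : ¬ ∃ A ∈ U, ∀ n, (A ∩ Ico (p n) (p (n + 1))).Subsingleton) (f : ℕ → ℕ) :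
    ∃ A ∈ U, A.Infinite ∧ (¬ ∀ n, (A ∩ Ico (p n) (p (n + 1))).Subsingleton) ∧
      ∃ oc os, CompareHomogeneous p f A oc os := by
  classical
  obtain ⟨A, hA, i, j, hc⟩ :=
    hWR.exists_two_colours fun x y => (decide (Separated p x y), compare (f x) (f y))
  have hinf : A.Infinite := fun hfin => hNP A hfin hA
  have hpair : ¬ ∀ n, (A ∩ Ico (p n) (p (n + 1))).Subsingleton := fun h => hsel ⟨A, hA, h⟩
  refine ⟨A, hA, hinf, hpair, exists_eq_ite_of_two_colours hc ?_ ?_⟩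
  · obtain ⟨x, hx, y, hy, hxy⟩ := exists_separated_pair hp hinf
    exact ⟨x, hx, y, hy, hxy.lt, hxy⟩
  · obtain ⟨n, x, hx, y, hy, hxy⟩ := exists_pair_mem_Ico hpair
    exact ⟨x, hx.1, y, hy.1, hxy, not_separated_of_mem_Ico hp.monotone hx.2 hy.2⟩

theorem stmt13_general (U : Ultrafilter ℕ) (hNP : Nonprincipal U) (hWR : WeaklyRamsey U)
    (p : ℕ → ℕ) (hpm : StrictMono p)
    (hsel : ¬ ∃ A ∈ U, ∀ n, (A ∩ Set.Ico (p n) (p (n+1))).Subsingleton)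
    (f : ℕ → ℕ) :
    ∃ A ∈ U,
      (TypeI f A ∧ ¬ TypeII f A ∧ ¬ TypeIII p f A ∧ ¬ TypeIV p f A) ∨
      (¬ TypeI f A ∧ TypeII f A ∧ ¬ TypeIII p f A ∧ ¬ TypeIV p f A) ∨
      (¬ TypeI f A ∧ ¬ TypeII f A ∧ TypeIII p f A ∧ ¬ TypeIV p f A) ∨
      (¬ TypeI f A ∧ ¬ TypeII f A ∧ ¬ TypeIII p f A ∧ TypeIV p f A) := by
  obtain ⟨A, hA, hinf, hpair, oc, os, h⟩ := exists_compareHomogeneous hNP hWR hpm hsel f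
  refine ⟨A, hA, ?_⟩
  rw [h.typeI_iff hpm hinf hpair, h.typeII_iff hpm hinf hpair, TypeIII, TypeIV,
    h.piecewise_eq_iff hpm.monotone hpair, h.piecewise_anti_iff hpm.monotone hpair,
    h.cross_iff hpm hinf]
  have hgt := h.ne_gt hpm hinf
  have heq := h.eq_of_eq hpm hinf hpair
  -- the surviving values `(oc, os)` are `(eq, eq)`, `(lt, lt)`, `(lt, eq)`, `(lt, gt)`
  cases oc <;> cases os <;> simp_all

theorem stmt13 (U : Ultrafilter ℕ) (hNP : Nonprincipal U) (hWR : WeaklyRamsey U)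
    (p : ℕ → ℕ) (hp0 : p 0 = 0) (hpm : StrictMono p)
    (hsel : ¬ ∃ A ∈ U, ∀ n, (A ∩ Set.Ico (p n) (p (n+1))).Subsingleton)
    (f : ℕ → ℕ) :
    ∃ A ∈ U,
      (TypeI f A ∧ ¬ TypeII f A ∧ ¬ TypeIII p f A ∧ ¬ TypeIV p f A) ∨
      (¬ TypeI f A ∧ TypeII f A ∧ ¬ TypeIII p f A ∧ ¬ TypeIV p f A) ∨
      (¬ TypeI f A ∧ ¬ TypeII f A ∧ TypeIII p f A ∧ ¬ TypeIV p f A) ∨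
      (¬ TypeI f A ∧ ¬ TypeII f A ∧ ¬ TypeIII p f A ∧ TypeIV p f A) :=
  stmt13_general U hNP hWR p hpm hsel f
end

section
/- Let U be a weakly Ramsey non-selective ultrafilter with witnessing interval partition P = ⟨[p_n, p_{n+1})⟩. In the ultrapower ℕ^ℕ/U, let A, B, S, E, F be the cuts generated (downward for F; upward for the others) by the families {a^A_P : A ∈ U}, {b^A_P : A ∈ U}, {functions 1-1 mod U}, {functions increasing mod U}, {f : U is f-QS}, where for p_n ≤ x < p_{n+1}, a^A_P(x) = |A ∩ [p_n, x)| and b^A_P(x) = |A ∩ [x, p_{n+1})|. Then S = min{A, B}, A = E, and B = F. -/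
/-!
Weak Ramseyness, applied to colourings recording whether `x < y` lie in the same interval of `P`
and how `g x` compares with `g y`, shrinks every `g` on a set of `U` to one of three shapes:
constant, nondecreasing, or strictly decreasing inside each interval. Since `U` contains no
selector for `P`, a function injective inside the intervals is unbounded mod `U`, which excludes
the mixed shapes. A strictly increasing `g` on `A` dominates `a^A_P`; a `g` strictly decreasing
inside the intervals of `A` dominates `b^B_P`, where `B` is `A` minus the maximum of each interval
(a selector, hence not in `U`). Conversely `a^A_P` is strictly increasing and `b^A_P` injective on a
set of `U`, while `b^A_P`, strictly decreasing inside intervals, is never nondecreasing mod `U`.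
-/

open Filter Set

def blockIndex (p : ℕ → ℕ) (x : ℕ) : ℕ := Nat.findGreatest (fun n => p n ≤ x) x

def IsSelector (p : ℕ → ℕ) (A : Set ℕ) : Prop :=
  ∀ n, (A ∩ Ico (p n) (p (n + 1))).Subsingleton

def InjOnBlocks (p g : ℕ → ℕ) (A : Set ℕ) : Prop :=
  ∀ x ∈ A, ∀ y ∈ A, blockIndex p x = blockIndex p y → g x = g y → x = y

def StrictMonoOnBlocks (p g : ℕ → ℕ) (A : Set ℕ) : Prop :=
  ∀ x ∈ A, ∀ y ∈ A, x < y → blockIndex p x = blockIndex p y → g x < g y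

def StrictAntiOnBlocks (p g : ℕ → ℕ) (A : Set ℕ) : Prop :=
  ∀ x ∈ A, ∀ y ∈ A, x < y → blockIndex p x = blockIndex p y → g y < g x

/-- The paper's `a^A_P`. -/
noncomputable def countBelow (p : ℕ → ℕ) (A : Set ℕ) (x : ℕ) : ℕ :=
  (A ∩ Ico (p (blockIndex p x)) x).ncard

/-- The paper's `b^A_P`. -/
noncomputable def countAbove (p : ℕ → ℕ) (A : Set ℕ) (x : ℕ) : ℕ :=
  (A ∩ Ico x (p (blockIndex p x + 1))).ncard

def blockMaxima (p : ℕ → ℕ) (A : Set ℕ) : Set ℕ :=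
  {x ∈ A | ∀ y ∈ A, blockIndex p y = blockIndex p x → y ≤ x}

lemma Ultrafilter.exists_fiber_mem_of_lt {α : Type*} {U : Ultrafilter α} {S : Set α}
    (hS : S ∈ U) {g : α → ℕ} {k : ℕ} (hg : ∀ x ∈ S, g x < k) :
    ∃ v, {x ∈ S | g x = v} ∈ U := by
  obtain ⟨v, -, hv⟩ := (U.finite_biUnion_mem_iff (finite_Iio k)).1 <|
    mem_of_superset hS fun x hx =>
      mem_biUnion (t := fun v => {y ∈ S | g y = v}) (hg x hx) ⟨hx, rfl⟩
  exact ⟨v, hv⟩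

lemma leU_refl (U : Ultrafilter ℕ) (f : ℕ → ℕ) : leU U f f :=
  univ_mem' fun x => (le_rfl : f x ≤ f x)

lemma leU_trans {U : Ultrafilter ℕ} {f g h : ℕ → ℕ} (hfg : leU U f g) (hgh : leU U g h) :
    leU U f h :=
  mem_of_superset (inter_mem hfg hgh) fun x hx => (le_trans hx.1 hx.2 : f x ≤ h x)

lemma WeaklyRamsey.exists_mem_homogeneous {U : Ultrafilter ℕ} (hWR : WeaklyRamsey U)
    {Q : ℕ → ℕ → Prop} (hQ : ∀ K ∈ U, ∃ x ∈ K, ∃ y ∈ K, x < y ∧ ¬ Q x y)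
    (P : ℕ → ℕ → Prop) {C : Set ℕ} (hC : C ∈ U) :
    ∃ K ∈ U, K ⊆ C ∧ ((∀ x ∈ K, ∀ y ∈ K, x < y → Q x y → P x y) ∨
      (∀ x ∈ K, ∀ y ∈ K, x < y → Q x y → ¬ P x y)) := by
  classical
  obtain ⟨H, hH, i, j, hij⟩ := hWR 3 fun x y => if Q x y then if P x y then 1 else 2 else 0
  have hK : H ∩ C ∈ U := inter_mem hH hC
  refine ⟨H ∩ C, hK, inter_subset_right, ?_⟩
  by_contra! h
  obtain ⟨⟨u, hu, v, hv, huv, hQuv, hPuv⟩, ⟨x, hx, y, hy, hxy, hQxy, hPxy⟩⟩ := h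
  obtain ⟨s, hs, t, ht, hst, hQst⟩ := hQ _ hK
  have three_colours :
      ∀ i j : Fin 3, (0 = i ∨ 0 = j) → (1 = i ∨ 1 = j) → (2 = i ∨ 2 = j) → False := by
    decide
  exact three_colours i j (by simpa [hQst] using hij s hs.1 t ht.1 hst)
    (by simpa [hQxy, hPxy] using hij x hx.1 y hy.1 hxy)
    (by simpa [hQuv, hPuv] using hij u hu.1 v hv.1 huv)

section Intervals

variable {p : ℕ → ℕ}

lemma apply_blockIndex_le (hp0 : p 0 = 0) (x : ℕ) : p (blockIndex p x) ≤ x :=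
  Nat.findGreatest_spec (P := fun n => p n ≤ x) (Nat.zero_le x) (by simp [hp0])

lemma lt_apply_blockIndex_succ (hpm : StrictMono p) (x : ℕ) : x < p (blockIndex p x + 1) := by
  by_contra! hle
  have := Nat.le_findGreatest (P := fun n => p n ≤ x) (hpm.le_apply.trans hle) hle
  exact (Nat.lt_succ_self _).not_ge this

lemma blockIndex_eq (hp0 : p 0 = 0) (hpm : StrictMono p) {n x : ℕ} (h₁ : p n ≤ x)
    (h₂ : x < p (n + 1)) : blockIndex p x = n := by
  have hlo := apply_blockIndex_le hp0 x
  have hhi := lt_apply_blockIndex_succ hpm x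
  by_contra hne
  rcases Nat.lt_or_gt_of_ne hne with hlt | hlt
  · have := hpm.monotone (show blockIndex p x + 1 ≤ n by omega); omega
  · have := hpm.monotone (show n + 1 ≤ blockIndex p x by omega); omega

lemma blockIndex_eq_of_le_of_lt (hp0 : p 0 = 0) (hpm : StrictMono p) {x y : ℕ} (hxy : x ≤ y)
    (hy : y < p (blockIndex p x + 1)) : blockIndex p y = blockIndex p x :=
  blockIndex_eq hp0 hpm ((apply_blockIndex_le hp0 x).trans hxy) hy

lemma isSelector_of_eq_of_blockIndex_eq (hp0 : p 0 = 0) (hpm : StrictMono p) {A : Set ℕ}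
    (h : ∀ x ∈ A, ∀ y ∈ A, blockIndex p x = blockIndex p y → x = y) : IsSelector p A :=
  fun _ _ hx _ hy => h _ hx.1 _ hy.1 <| by
    rw [blockIndex_eq hp0 hpm hx.2.1 hx.2.2, blockIndex_eq hp0 hpm hy.2.1 hy.2.2]

lemma isSelector_blockMaxima (hp0 : p 0 = 0) (hpm : StrictMono p) (A : Set ℕ) :
    IsSelector p (blockMaxima p A) :=
  isSelector_of_eq_of_blockIndex_eq hp0 hpm fun _ hx _ hy hxy =>
    le_antisymm (hy.2 _ hx.1 hxy) (hx.2 _ hy.1 hxy.symm)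

lemma StrictMonoOnBlocks.injOnBlocks {g : ℕ → ℕ} {A : Set ℕ}
    (hg : StrictMonoOnBlocks p g A) : InjOnBlocks p g A := by
  intro x hx y hy hb hxy
  by_contra hne
  rcases Nat.lt_or_gt_of_ne hne with hlt | hlt
  · exact (hg x hx y hy hlt hb).ne hxy
  · exact (hg y hy x hx hlt hb.symm).ne' hxy

lemma StrictAntiOnBlocks.injOnBlocks {g : ℕ → ℕ} {A : Set ℕ}
    (hg : StrictAntiOnBlocks p g A) : InjOnBlocks p g A := by
  intro x hx y hy hb hxy
  by_contra hne
  rcases Nat.lt_or_gt_of_ne hne with hlt | hlt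
  · exact (hg x hx y hy hlt hb).ne' hxy
  · exact (hg y hy x hx hlt hb.symm).ne hxy

lemma countBelow_strictMonoOnBlocks (hp0 : p 0 = 0) (A : Set ℕ) :
    StrictMonoOnBlocks p (countBelow p A) A := by
  intro x hx y _ hxy hb
  simp only [countBelow, hb]
  refine ncard_lt_ncard ⟨inter_subset_inter_right _ (Ico_subset_Ico_right hxy.le), fun h => ?_⟩
    ((finite_Ico _ _).inter_of_right _)
  exact lt_irrefl x (h ⟨hx, hb ▸ apply_blockIndex_le hp0 x, hxy⟩).2.2

lemma countAbove_strictAntiOnBlocks (hpm : StrictMono p) (A : Set ℕ) :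
    StrictAntiOnBlocks p (countAbove p A) A := by
  intro x hx y _ hxy hb
  simp only [countAbove, ← hb]
  refine ncard_lt_ncard ⟨inter_subset_inter_right _ (Ico_subset_Ico_left hxy.le), fun h => ?_⟩
    ((finite_Ico _ _).inter_of_right _)
  exact hxy.not_ge (h ⟨hx, le_rfl, lt_apply_blockIndex_succ hpm x⟩).2.1

lemma countBelow_le_of_strictMonoOn {g : ℕ → ℕ} {A : Set ℕ} (hg : StrictMonoOn g A)
    {x : ℕ} (hx : x ∈ A) : countBelow p A x ≤ g x := by
  refine (ncard_le_ncard_of_injOn (t := Iio (g x)) g (fun z hz => hg hz.1 hx hz.2.2)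
    (hg.injOn.mono inter_subset_left)).trans_eq (ncard_Iio_nat _)

lemma countAbove_sdiff_blockMaxima_le (hp0 : p 0 = 0) (hpm : StrictMono p) {g : ℕ → ℕ}
    {A : Set ℕ} (hg : StrictAntiOnBlocks p g A) {x : ℕ} (hx : x ∈ A \ blockMaxima p A) :
    countAbove p (A \ blockMaxima p A) x ≤ g x := by
  have hblock : ∀ z ∈ Ico x (p (blockIndex p x + 1)), blockIndex p z = blockIndex p x :=
    fun z hz => blockIndex_eq_of_le_of_lt hp0 hpm hz.1 hz.2
  -- `g` maps the counted points injectively into `(0, g x]`: `g z > 0` since `z` is not the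
  -- maximum of `A` in its interval
  refine (ncard_le_ncard_of_injOn (t := Ioc 0 (g x)) g ?_ ?_).trans_eq (by simp)
  · rintro z ⟨⟨hzA, hzmax⟩, hz⟩
    obtain ⟨y, hyA, hyz, hzy⟩ : ∃ y ∈ A, blockIndex p y = blockIndex p z ∧ z < y := by
      simpa [blockMaxima, hzA] using hzmax
    refine ⟨(hg z hzA y hyA hzy hyz.symm).trans_le' (Nat.zero_le _), ?_⟩
    rcases hz.1.eq_or_lt with rfl | hxz
    · exact le_rfl
    · exact (hg x hx.1 z hzA hxz (hblock z hz).symm).le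
  · rintro u ⟨⟨huA, -⟩, hu⟩ v ⟨⟨hvA, -⟩, hv⟩ huv
    exact hg.injOnBlocks u huA v hvA ((hblock u hu).trans (hblock v hv).symm) huv

end Intervals

section Ultrafilter

variable {U : Ultrafilter ℕ} {p : ℕ → ℕ}

lemma exists_lt_blockIndex_eq (hp0 : p 0 = 0) (hpm : StrictMono p)
    (hsel : ¬ ∃ A ∈ U, IsSelector p A) {K : Set ℕ} (hK : K ∈ U) :
    ∃ x ∈ K, ∃ y ∈ K, x < y ∧ blockIndex p x = blockIndex p y := by
  by_contra! h
  refine hsel ⟨K, hK, isSelector_of_eq_of_blockIndex_eq hp0 hpm fun x hx y hy hxy => ?_⟩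
  rcases lt_trichotomy x y with hlt | heq | hgt
  · exact absurd hxy (h x hx y hy hlt)
  · exact heq
  · exact absurd hxy.symm (h y hy x hx hgt)

lemma lt_and_blockIndex_ne_mem (hNP : Nonprincipal U) (hpm : StrictMono p) (x₀ : ℕ) :
    {y | x₀ < y ∧ blockIndex p x₀ ≠ blockIndex p y} ∈ U := by
  refine mem_of_superset (Ultrafilter.compl_mem_iff_notMem.2 (hNP _ (finite_Iio _)))
    fun y (hy : ¬ y < p (blockIndex p x₀ + 1)) => ⟨?_, fun hb => hy ?_⟩
  · exact (lt_apply_blockIndex_succ hpm x₀).trans_le (not_lt.1 hy)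
  · exact hb ▸ lt_apply_blockIndex_succ hpm y

lemma exists_lt_blockIndex_ne (hNP : Nonprincipal U) (hpm : StrictMono p) {K : Set ℕ}
    (hK : K ∈ U) : ∃ x ∈ K, ∃ y ∈ K, x < y ∧ blockIndex p x ≠ blockIndex p y := by
  obtain ⟨x, hx⟩ := U.nonempty_of_mem hK
  obtain ⟨y, hy, hxy, hb⟩ :=
    U.nonempty_of_mem (inter_mem hK (lt_and_blockIndex_ne_mem hNP hpm x))
  exact ⟨x, hx, y, hy, hxy, hb⟩

lemma exists_mem_homogeneous_across_blocks (hWR : WeaklyRamsey U) (hp0 : p 0 = 0)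
    (hpm : StrictMono p) (hsel : ¬ ∃ A ∈ U, IsSelector p A) (P : ℕ → ℕ → Prop)
    {C : Set ℕ} (hC : C ∈ U) :
    ∃ K ∈ U, K ⊆ C ∧
      ((∀ x ∈ K, ∀ y ∈ K, x < y → blockIndex p x ≠ blockIndex p y → P x y) ∨
        (∀ x ∈ K, ∀ y ∈ K, x < y → blockIndex p x ≠ blockIndex p y → ¬ P x y)) :=
  hWR.exists_mem_homogeneous (fun _ hK => (exists_lt_blockIndex_eq hp0 hpm hsel hK).imp
    fun _ ⟨hx, y, hy, hxy, hb⟩ => ⟨hx, y, hy, hxy, not_not.2 hb⟩) P hC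

lemma exists_mem_homogeneous_within_blocks (hNP : Nonprincipal U) (hWR : WeaklyRamsey U)
    (hpm : StrictMono p) (P : ℕ → ℕ → Prop) {C : Set ℕ} (hC : C ∈ U) :
    ∃ K ∈ U, K ⊆ C ∧
      ((∀ x ∈ K, ∀ y ∈ K, x < y → blockIndex p x = blockIndex p y → P x y) ∨
        (∀ x ∈ K, ∀ y ∈ K, x < y → blockIndex p x = blockIndex p y → ¬ P x y)) :=
  hWR.exists_mem_homogeneous (fun _ hK => exists_lt_blockIndex_ne hNP hpm hK) P hC

lemma InjOnBlocks.setOf_lt_notMem (hp0 : p 0 = 0) (hpm : StrictMono p)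
    (hsel : ¬ ∃ A ∈ U, IsSelector p A) {g : ℕ → ℕ} {A : Set ℕ} (hg : InjOnBlocks p g A)
    (k : ℕ) : {x ∈ A | g x < k} ∉ U := by
  intro hk
  obtain ⟨v, hv⟩ := Ultrafilter.exists_fiber_mem_of_lt hk fun x hx => hx.2
  obtain ⟨x, hx, y, hy, hxy, hb⟩ := exists_lt_blockIndex_eq hp0 hpm hsel hv
  exact hxy.ne (hg x hx.1.1 y hy.1.1 hb (hx.2.trans hy.2.symm))

lemma InjOnBlocks.exists_lt_blockIndex_ne_lt (hNP : Nonprincipal U) (hp0 : p 0 = 0)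
    (hpm : StrictMono p) (hsel : ¬ ∃ A ∈ U, IsSelector p A) {g : ℕ → ℕ} {A K : Set ℕ}
    (hg : InjOnBlocks p g A) (hK : K ∈ U) (hKA : K ⊆ A) :
    ∃ x ∈ K, ∃ y ∈ K, x < y ∧ blockIndex p x ≠ blockIndex p y ∧ g x < g y := by
  by_contra! h
  obtain ⟨x, hx⟩ := U.nonempty_of_mem hK
  -- otherwise `g` is bounded by `g x` beyond the interval of `x`
  refine hg.setOf_lt_notMem hp0 hpm hsel (g x + 1) <|
    mem_of_superset (inter_mem hK (lt_and_blockIndex_ne_mem hNP hpm x)) fun y hy => ?_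
  exact ⟨hKA hy.1, Nat.lt_succ_of_le (h x hx y hy.1 hy.2.1 hy.2.2)⟩

lemma exists_mem_const_or_monotoneOn_or_strictAntiOnBlocks (hNP : Nonprincipal U)
    (hWR : WeaklyRamsey U) (hp0 : p 0 = 0) (hpm : StrictMono p)
    (hsel : ¬ ∃ A ∈ U, IsSelector p A) (g : ℕ → ℕ) {C : Set ℕ} (hC : C ∈ U) :
    ∃ K ∈ U, K ⊆ C ∧
      ((∃ v, ∀ x ∈ K, g x = v) ∨ MonotoneOn g K ∨ StrictAntiOnBlocks p g K) := by
  obtain ⟨K, hK, hKC, hacross | hacross⟩ :=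
    exists_mem_homogeneous_across_blocks hWR hp0 hpm hsel (fun x y => g x ≤ g y) hC
  · obtain ⟨L, hL, hLK, hwithin | hwithin⟩ :=
      exists_mem_homogeneous_within_blocks hNP hWR hpm (fun x y => g x ≤ g y) hK
    · refine ⟨L, hL, hLK.trans hKC, Or.inr (Or.inl fun x hx y hy hxy => ?_)⟩
      rcases hxy.eq_or_lt with rfl | hlt
      · exact le_rfl
      by_cases hb : blockIndex p x = blockIndex p y
      · exact hwithin x hx y hy hlt hb
      · exact hacross x (hLK hx) y (hLK hy) hlt hb
    · exact ⟨L, hL, hLK.trans hKC,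
        Or.inr (Or.inr fun x hx y hy hxy hb => not_le.1 (hwithin x hx y hy hxy hb))⟩
  · -- beyond the interval of some `x ∈ K`, `g` stays below `g x`, so it is constant mod `U`
    obtain ⟨x, hx⟩ := U.nonempty_of_mem hK
    obtain ⟨v, hv⟩ := Ultrafilter.exists_fiber_mem_of_lt
      (inter_mem hK (lt_and_blockIndex_ne_mem hNP hpm x)) (k := g x)
      fun y hy => not_le.1 (hacross x hx y hy.1 hy.2.1 hy.2.2)
    exact ⟨_, hv, fun y hy => hKC hy.1.1, Or.inl ⟨v, fun y hy => hy.2⟩⟩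

lemma exists_strictMonoOn_of_strictMonoOnBlocks (hNP : Nonprincipal U) (hWR : WeaklyRamsey U)
    (hp0 : p 0 = 0) (hpm : StrictMono p) (hsel : ¬ ∃ A ∈ U, IsSelector p A) {g : ℕ → ℕ}
    {A : Set ℕ} (hA : A ∈ U) (hg : StrictMonoOnBlocks p g A) :
    ∃ K ∈ U, StrictMonoOn g K := by
  obtain ⟨K, hK, hKA, hacross | hacross⟩ :=
    exists_mem_homogeneous_across_blocks hWR hp0 hpm hsel (fun x y => g x < g y) hA
  · refine ⟨K, hK, fun x hx y hy hxy => ?_⟩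
    by_cases hb : blockIndex p x = blockIndex p y
    · exact hg x (hKA hx) y (hKA hy) hxy hb
    · exact hacross x hx y hy hxy hb
  · obtain ⟨x, hx, y, hy, hxy, hb, hlt⟩ :=
      hg.injOnBlocks.exists_lt_blockIndex_ne_lt hNP hp0 hpm hsel hK hKA
    exact absurd hlt (hacross x hx y hy hxy hb)

lemma exists_injOn_of_injOnBlocks (hNP : Nonprincipal U) (hWR : WeaklyRamsey U)
    (hp0 : p 0 = 0) (hpm : StrictMono p) (hsel : ¬ ∃ A ∈ U, IsSelector p A) {g : ℕ → ℕ}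
    {A : Set ℕ} (hA : A ∈ U) (hg : InjOnBlocks p g A) : ∃ K ∈ U, InjOn g K := by
  obtain ⟨K, hK, hKA, hacross | hacross⟩ :=
    exists_mem_homogeneous_across_blocks hWR hp0 hpm hsel (fun x y => g x ≠ g y) hA
  · refine ⟨K, hK, fun x hx y hy hxy => ?_⟩
    by_cases hb : blockIndex p x = blockIndex p y
    · exact hg x (hKA hx) y (hKA hy) hb hxy
    by_contra hne
    rcases Nat.lt_or_gt_of_ne hne with hlt | hlt
    · exact hacross x hx y hy hlt hb hxy
    · exact hacross y hy x hx hlt (Ne.symm hb) hxy.symm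
  · obtain ⟨x, hx, y, hy, hxy, hb, hlt⟩ :=
      hg.exists_lt_blockIndex_ne_lt hNP hp0 hpm hsel hK hKA
    exact absurd hlt.ne (hacross x hx y hy hxy hb)

lemma leU_countBelow_of_strictMonoOn {g h : ℕ → ℕ} {A : Set ℕ} (hA : A ∈ U)
    (hg : StrictMonoOn g A) (hgh : leU U g h) : leU U (countBelow p A) h :=
  leU_trans (mem_of_superset hA fun _ hx => countBelow_le_of_strictMonoOn hg hx) hgh

lemma exists_leU_countAbove_of_strictAntiOnBlocks (hp0 : p 0 = 0) (hpm : StrictMono p)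
    (hsel : ¬ ∃ A ∈ U, IsSelector p A) {g h : ℕ → ℕ} {A : Set ℕ} (hA : A ∈ U)
    (hg : StrictAntiOnBlocks p g A) (hgh : leU U g h) : ∃ B ∈ U, leU U (countAbove p B) h := by
  have hB : A \ blockMaxima p A ∈ U := sdiff_mem hA <|
    Ultrafilter.compl_mem_iff_notMem.2 fun hM => hsel ⟨_, hM, isSelector_blockMaxima hp0 hpm A⟩
  exact ⟨_, hB, leU_trans (mem_of_superset hB fun _ hx =>
    countAbove_sdiff_blockMaxima_le hp0 hpm hg hx) hgh⟩

theorem exists_injOn_leU_iff (hNP : Nonprincipal U) (hWR : WeaklyRamsey U) (hp0 : p 0 = 0)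
    (hpm : StrictMono p) (hsel : ¬ ∃ A ∈ U, IsSelector p A) (h : ℕ → ℕ) :
    (∃ g : ℕ → ℕ, (∃ A ∈ U, InjOn g A) ∧ leU U g h) ↔
      (∃ A ∈ U, leU U (countBelow p A) h) ∨ (∃ A ∈ U, leU U (countAbove p A) h) := by
  constructor
  · rintro ⟨g, ⟨A, hA, hg⟩, hgh⟩
    obtain ⟨K, hK, hKA, ⟨v, hv⟩ | hmono | hanti⟩ :=
      exists_mem_const_or_monotoneOn_or_strictAntiOnBlocks hNP hWR hp0 hpm hsel g hA
    · obtain ⟨x, hx, y, hy, hxy, -⟩ := exists_lt_blockIndex_ne hNP hpm hK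
      exact absurd (hg (hKA hx) (hKA hy) ((hv x hx).trans (hv y hy).symm)) hxy.ne
    · exact Or.inl ⟨K, hK, leU_countBelow_of_strictMonoOn hK
        (hmono.strictMonoOn_of_injOn (hg.mono hKA)) hgh⟩
    · exact Or.inr (exists_leU_countAbove_of_strictAntiOnBlocks hp0 hpm hsel hK hanti hgh)
  · rintro (⟨A, hA, hAh⟩ | ⟨A, hA, hAh⟩)
    · obtain ⟨K, hK, hmono⟩ := exists_strictMonoOn_of_strictMonoOnBlocks hNP hWR hp0 hpm hsel
        hA (countBelow_strictMonoOnBlocks hp0 A)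
      exact ⟨_, ⟨K, hK, hmono.injOn⟩, hAh⟩
    · exact ⟨_, exists_injOn_of_injOnBlocks hNP hWR hp0 hpm hsel hA
        (countAbove_strictAntiOnBlocks hpm A).injOnBlocks, hAh⟩

theorem exists_countBelow_leU_iff (hNP : Nonprincipal U) (hWR : WeaklyRamsey U)
    (hp0 : p 0 = 0) (hpm : StrictMono p) (hsel : ¬ ∃ A ∈ U, IsSelector p A) (h : ℕ → ℕ) :
    (∃ A ∈ U, leU U (countBelow p A) h) ↔
      ∃ g : ℕ → ℕ, (∃ A ∈ U, StrictMonoOn g A) ∧ leU U g h := by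
  constructor
  · rintro ⟨A, hA, hAh⟩
    exact ⟨_, exists_strictMonoOn_of_strictMonoOnBlocks hNP hWR hp0 hpm hsel hA
      (countBelow_strictMonoOnBlocks hp0 A), hAh⟩
  · rintro ⟨g, ⟨A, hA, hg⟩, hgh⟩
    exact ⟨A, hA, leU_countBelow_of_strictMonoOn hA hg hgh⟩

theorem exists_qsFor_leU_iff (hNP : Nonprincipal U) (hWR : WeaklyRamsey U) (hp0 : p 0 = 0)
    (hpm : StrictMono p) (hsel : ¬ ∃ A ∈ U, IsSelector p A) (h : ℕ → ℕ) :
    (∃ f : ℕ → ℕ, QSfor U f ∧ leU U h f) ↔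
      ¬ ∃ A ∈ U, leU U (countAbove p A) h := by
  constructor
  · rintro ⟨f, hf, hhf⟩ ⟨A, hA, hAh⟩
    obtain ⟨D, hD, hmono⟩ := hf _ (leU_trans hAh hhf)
    obtain ⟨x, hx, y, hy, hxy, hb⟩ := exists_lt_blockIndex_eq hp0 hpm hsel (inter_mem hD hA)
    exact (countAbove_strictAntiOnBlocks hpm A x hx.2 y hy.2 hxy hb).not_ge
      (hmono x hx.1 y hy.1 hxy.le)
  · refine fun hnot => ⟨h, fun g hg => ?_, leU_refl U h⟩
    obtain ⟨K, hK, -, ⟨v, hv⟩ | hmono | hanti⟩ :=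
      exists_mem_const_or_monotoneOn_or_strictAntiOnBlocks hNP hWR hp0 hpm hsel g hg
    · exact ⟨K, hK, fun x hx y hy _ => ((hv x hx).trans (hv y hy).symm).le⟩
    · exact ⟨K, hK, fun x hx y hy => hmono hx hy⟩
    · exact absurd (exists_leU_countAbove_of_strictAntiOnBlocks hp0 hpm hsel hK hanti hg) hnot

end Ultrafilter

theorem stmt15 (U : Ultrafilter ℕ) (hNP : Nonprincipal U) (hWR : WeaklyRamsey U)
    (p : ℕ → ℕ) (hp0 : p 0 = 0) (hpm : StrictMono p)
    (hsel : ¬ ∃ A ∈ U, ∀ n, (A ∩ Set.Ico (p n) (p (n+1))).Subsingleton)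
    (a b : Set ℕ → ℕ → ℕ)
    (hab : ∀ (A : Set ℕ) (n x : ℕ), p n ≤ x → x < p (n+1) →
      a A x = (A ∩ Set.Ico (p n) x).ncard ∧ b A x = (A ∩ Set.Ico x (p (n+1))).ncard) :
    (∀ h : ℕ → ℕ, (∃ g : ℕ → ℕ, (∃ A ∈ U, Set.InjOn g A) ∧ leU U g h) ↔
       ((∃ A ∈ U, leU U (a A) h) ∨ (∃ A ∈ U, leU U (b A) h))) ∧
    (∀ h : ℕ → ℕ, (∃ A ∈ U, leU U (a A) h) ↔
       (∃ g : ℕ → ℕ, (∃ A ∈ U, ∀ x ∈ A, ∀ y ∈ A, x < y → g x < g y) ∧ leU U g h)) ∧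
    (∀ h : ℕ → ℕ, (∃ f : ℕ → ℕ, QSfor U f ∧ leU U h f) ↔
       ¬ ∃ A ∈ U, leU U (b A) h) := by
  have hcount (A : Set ℕ) (x : ℕ) : a A x = countBelow p A x ∧ b A x = countAbove p A x :=
    hab A _ x (apply_blockIndex_le hp0 x) (lt_apply_blockIndex_succ hpm x)
  obtain rfl : a = countBelow p := funext fun A => funext fun x => (hcount A x).1
  obtain rfl : b = countAbove p := funext fun A => funext fun x => (hcount A x).2
  exact ⟨exists_injOn_leU_iff hNP hWR hp0 hpm hsel,
    exists_countBelow_leU_iff hNP hWR hp0 hpm hsel, exists_qsFor_leU_iff hNP hWR hp0 hpm hsel⟩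
end

section
/- Let U be a nonprincipal ultrafilter on ℕ and P = ⟨[p_n, p_{n+1})⟩ an interval partition. For A ∈ U and p_n ≤ x < p_{n+1} set a^A(x) = |A ∩ [p_n, x)|, b^A(x) = |A ∩ [x, p_{n+1})|, c^A(x) = |A ∩ [p_n, p_{n+1})|. Then in the ultrapower ℕ^ℕ/U, the cut C generated upward by {c^A : A ∈ U} equals the maximum of the cuts generated upward by {a^A : A ∈ U} and {b^A : A ∈ U}. -/
/-!
Since `c^A = a^A + b^A`, a bound on `c^A` bounds `a^A` and `b^A`. Conversely, if `a^A ≤ h` and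
`b^B ≤ h` mod `U`, then `D = A ∩ B ∈ U` has `c^D ≤ a^A + b^B ≤ 2h`. Splitting `D` inside every
interval into its lower and upper half (according to the rank `a^D`) gives two sets, one of which
lies in `U`, and each meets every interval in at most `⌈c^D / 2⌉ ≤ h` points.
-/

open Set

theorem StrictMono.exists_mem_Ico_succ {p : ℕ → ℕ} (hp0 : p 0 = 0) (hp : StrictMono p) (x : ℕ) :
    ∃ n, x ∈ Ico (p n) (p (n + 1)) := by
  have hcover := iUnion_Ico_map_succ_eq_Ici (fun n => hp.monotone (Nat.zero_le n))
    hp.not_bddAbove_range_of_wellFoundedLT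
  have hx : x ∈ Ici (p ⊥) := by simp [hp0]
  rw [← hcover, mem_iUnion] at hx
  simpa using hx

section Rank
variable {α : Type*} [LinearOrder α] {T : Set α}

theorem Set.Finite.strictMonoOn_ncard_inter_Iio (hT : T.Finite) :
    StrictMonoOn (fun y => (T ∩ Iio y).ncard) T := fun y hy _ _ hyz =>
  ncard_lt_ncard ⟨inter_subset_inter_right _ (Iio_subset_Iio hyz.le),
    fun h => lt_irrefl y (h ⟨hy, hyz⟩).2⟩ (hT.inter_of_left _)

theorem Set.Finite.ncard_inter_Iio_lt {y : α} (hT : T.Finite) (hy : y ∈ T) :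
    (T ∩ Iio y).ncard < T.ncard :=
  ncard_lt_ncard ⟨inter_subset_left, fun h => lt_irrefl y (h hy).2⟩ hT

theorem Set.Finite.ncard_setOf_ncard_inter_Iio_lt_le (hT : T.Finite) (k : ℕ) :
    {y ∈ T | (T ∩ Iio y).ncard < k}.ncard ≤ k := by
  simpa using ncard_le_ncard_of_injOn _ (t := Iio k) (fun y hy => hy.2)
    (hT.strictMonoOn_ncard_inter_Iio.injOn.mono (sep_subset _ _))

theorem Set.Finite.ncard_setOf_le_ncard_inter_Iio_le (hT : T.Finite) (k : ℕ) :
    {y ∈ T | k ≤ (T ∩ Iio y).ncard}.ncard ≤ T.ncard - k := by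
  simpa using ncard_le_ncard_of_injOn _ (t := Ico k T.ncard)
    (fun y hy => ⟨hy.2, hT.ncard_inter_Iio_lt hy.1⟩)
    (hT.strictMonoOn_ncard_inter_Iio.injOn.mono (sep_subset _ _))

end Rank

theorem Set.ncard_inter_Ico_add_ncard_inter_Ico (S : Set ℕ) {u x v : ℕ} (hux : u ≤ x)
    (hxv : x ≤ v) : (S ∩ Ico u x).ncard + (S ∩ Ico x v).ncard = (S ∩ Ico u v).ncard := by
  rw [← Ico_union_Ico_eq_Ico hux hxv, inter_union_distrib_left,
    ncard_union_eq (Ico_disjoint_Ico_same.mono inter_subset_right inter_subset_right)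
      ((finite_Ico _ _).inter_of_right _) ((finite_Ico _ _).inter_of_right _)]

def IsIntervalCounting (p : ℕ → ℕ) (a b c : Set ℕ → ℕ → ℕ) : Prop :=
  ∀ (A : Set ℕ) (n x : ℕ), p n ≤ x → x < p (n + 1) →
    a A x = (A ∩ Ico (p n) x).ncard ∧ b A x = (A ∩ Ico x (p (n + 1))).ncard ∧
      c A x = (A ∩ Ico (p n) (p (n + 1))).ncard

namespace IsIntervalCounting

variable {p : ℕ → ℕ} {a b c : Set ℕ → ℕ → ℕ}

theorem c_eq_add (h : IsIntervalCounting p a b c) (hp : ∀ x, ∃ n, x ∈ Ico (p n) (p (n + 1)))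
    (A : Set ℕ) (x : ℕ) : c A x = a A x + b A x := by
  obtain ⟨n, hxn, hxn'⟩ := hp x
  obtain ⟨ha, hb, hc⟩ := h A n x hxn hxn'
  rw [ha, hb, hc, ncard_inter_Ico_add_ncard_inter_Ico _ hxn hxn'.le]

theorem a_mono (h : IsIntervalCounting p a b c) (hp : ∀ x, ∃ n, x ∈ Ico (p n) (p (n + 1)))
    {A B : Set ℕ} (hAB : A ⊆ B) (x : ℕ) : a A x ≤ a B x := by
  obtain ⟨n, hxn, hxn'⟩ := hp x
  rw [(h A n x hxn hxn').1, (h B n x hxn hxn').1]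
  exact ncard_le_ncard (inter_subset_inter_left _ hAB) ((finite_Ico _ _).inter_of_right _)

theorem b_mono (h : IsIntervalCounting p a b c) (hp : ∀ x, ∃ n, x ∈ Ico (p n) (p (n + 1)))
    {A B : Set ℕ} (hAB : A ⊆ B) (x : ℕ) : b A x ≤ b B x := by
  obtain ⟨n, hxn, hxn'⟩ := hp x
  rw [(h A n x hxn hxn').2.1, (h B n x hxn hxn').2.1]
  exact ncard_le_ncard (inter_subset_inter_left _ hAB) ((finite_Ico _ _).inter_of_right _)

/-- Inside the `n`-th interval, `a D y` is the rank of `y` in `D ∩ [p n, p (n + 1))` and `c D y`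
is the size of that set. -/
theorem setOf_inter_Ico_eq (h : IsIntervalCounting p a b c) (D : Set ℕ) (P : ℕ → ℕ → Prop)
    (n : ℕ) : {y ∈ D | P (a D y) (c D y)} ∩ Ico (p n) (p (n + 1)) =
      {y ∈ D ∩ Ico (p n) (p (n + 1)) |
        P (D ∩ Ico (p n) (p (n + 1)) ∩ Iio y).ncard (D ∩ Ico (p n) (p (n + 1))).ncard} := by
  ext y
  by_cases hy : y ∈ Ico (p n) (p (n + 1))
  · obtain ⟨ha, -, hc⟩ := h D n y hy.1 hy.2
    have hrank : D ∩ Ico (p n) (p (n + 1)) ∩ Iio y = D ∩ Ico (p n) y := by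
      rw [inter_assoc, Ico_inter_Iio, min_eq_right hy.2.le]
    simp only [mem_inter_iff, mem_ofPred_eq, ha, hc, hrank]
    tauto
  · simp only [mem_inter_iff, mem_ofPred_eq, hy]
    tauto

theorem two_mul_c_lowerHalf_le (h : IsIntervalCounting p a b c)
    (hp : ∀ x, ∃ n, x ∈ Ico (p n) (p (n + 1))) (D : Set ℕ) (x : ℕ) :
    2 * c {y ∈ D | 2 * a D y < c D y} x ≤ c D x + 1 := by
  obtain ⟨n, hxn, hxn'⟩ := hp x
  rw [(h _ n x hxn hxn').2.2, (h D n x hxn hxn').2.2, h.setOf_inter_Ico_eq D (2 * · < ·)]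
  set T := D ∩ Ico (p n) (p (n + 1))
  have hT : T.Finite := (finite_Ico _ _).inter_of_right _
  have hsub : {y ∈ T | 2 * (T ∩ Iio y).ncard < T.ncard} ⊆
      {y ∈ T | (T ∩ Iio y).ncard < (T.ncard + 1) / 2} := fun y ⟨hyT, hy⟩ => ⟨hyT, by omega⟩
  have := (ncard_le_ncard hsub (hT.sep _)).trans (hT.ncard_setOf_ncard_inter_Iio_lt_le _)
  omega

theorem two_mul_c_upperHalf_le (h : IsIntervalCounting p a b c)
    (hp : ∀ x, ∃ n, x ∈ Ico (p n) (p (n + 1))) (D : Set ℕ) (x : ℕ) :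
    2 * c {y ∈ D | c D y ≤ 2 * a D y} x ≤ c D x := by
  obtain ⟨n, hxn, hxn'⟩ := hp x
  rw [(h _ n x hxn hxn').2.2, (h D n x hxn hxn').2.2,
    h.setOf_inter_Ico_eq D (fun r m => m ≤ 2 * r)]
  set T := D ∩ Ico (p n) (p (n + 1))
  have hT : T.Finite := (finite_Ico _ _).inter_of_right _
  have hsub : {y ∈ T | T.ncard ≤ 2 * (T ∩ Iio y).ncard} ⊆
      {y ∈ T | (T.ncard + 1) / 2 ≤ (T ∩ Iio y).ncard} := fun y ⟨hyT, hy⟩ => ⟨hyT, by omega⟩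
  have := (ncard_le_ncard hsub (hT.sep _)).trans (hT.ncard_setOf_le_ncard_inter_Iio_le _)
  omega

theorem c_inter_le (h : IsIntervalCounting p a b c) (hp : ∀ x, ∃ n, x ∈ Ico (p n) (p (n + 1)))
    (A B : Set ℕ) (x : ℕ) : c (A ∩ B) x ≤ a A x + b B x :=
  h.c_eq_add hp (A ∩ B) x ▸
    add_le_add (h.a_mono hp inter_subset_left x) (h.b_mono hp inter_subset_right x)

theorem exists_mem_two_mul_c_le (h : IsIntervalCounting p a b c)
    (hp : ∀ x, ∃ n, x ∈ Ico (p n) (p (n + 1))) {U : Ultrafilter ℕ} {D : Set ℕ} (hD : D ∈ U) :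
    ∃ C ∈ U, ∀ x, 2 * c C x ≤ c D x + 1 := by
  have hsplit : {y ∈ D | 2 * a D y < c D y} ∪ {y ∈ D | c D y ≤ 2 * a D y} = D := by
    ext y
    simp only [mem_union, mem_sep_iff]
    have := Nat.lt_or_ge (2 * a D y) (c D y)
    tauto
  rcases Ultrafilter.union_mem_iff.1 (hsplit ▸ hD) with hC | hC
  · exact ⟨_, hC, h.two_mul_c_lowerHalf_le hp D⟩
  · exact ⟨_, hC, fun x => (h.two_mul_c_upperHalf_le hp D x).trans (Nat.le_succ _)⟩

end IsIntervalCounting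

theorem leU_of_le_of_leU {U : Ultrafilter ℕ} {f g h : ℕ → ℕ} (hfg : ∀ x, f x ≤ g x)
    (hg : leU U g h) : leU U f h :=
  Filter.mem_of_superset hg fun x hx => (hfg x).trans hx

theorem stmt16_general (U : Ultrafilter ℕ)
    (p : ℕ → ℕ) (hp0 : p 0 = 0) (hpm : StrictMono p)
    (a b c : Set ℕ → ℕ → ℕ)
    (habc : ∀ (A : Set ℕ) (n x : ℕ), p n ≤ x → x < p (n+1) →
      a A x = (A ∩ Set.Ico (p n) x).ncard ∧ b A x = (A ∩ Set.Ico x (p (n+1))).ncard ∧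
      c A x = (A ∩ Set.Ico (p n) (p (n+1))).ncard) :
    ∀ h : ℕ → ℕ, (∃ A ∈ U, leU U (c A) h) ↔
      ((∃ A ∈ U, leU U (a A) h) ∧ (∃ A ∈ U, leU U (b A) h)) := by
  have hcount : IsIntervalCounting p a b c := habc
  have hp := hpm.exists_mem_Ico_succ hp0
  intro h
  constructor
  · rintro ⟨A, hA, hAh⟩
    exact ⟨⟨A, hA, leU_of_le_of_leU (fun x => hcount.c_eq_add hp A x ▸ Nat.le_add_right _ _) hAh⟩,
      ⟨A, hA, leU_of_le_of_leU (fun x => hcount.c_eq_add hp A x ▸ Nat.le_add_left _ _) hAh⟩⟩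
  · rintro ⟨⟨A, hA, hAh⟩, B, hB, hBh⟩
    obtain ⟨C, hC, hCD⟩ := hcount.exists_mem_two_mul_c_le hp (Filter.inter_mem hA hB)
    refine ⟨C, hC, Filter.mem_of_superset (Filter.inter_mem hAh hBh) fun x ⟨hax, hbx⟩ => ?_⟩
    have hcD : c (A ∩ B) x ≤ 2 * h x :=
      (hcount.c_inter_le hp A B x).trans (two_mul (h x) ▸ add_le_add hax hbx)
    have := hCD x
    show c C x ≤ h x
    omega

theorem stmt16 (U : Ultrafilter ℕ) (hNP : Nonprincipal U)
    (p : ℕ → ℕ) (hp0 : p 0 = 0) (hpm : StrictMono p)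
    (a b c : Set ℕ → ℕ → ℕ)
    (habc : ∀ (A : Set ℕ) (n x : ℕ), p n ≤ x → x < p (n+1) →
      a A x = (A ∩ Set.Ico (p n) x).ncard ∧ b A x = (A ∩ Set.Ico x (p (n+1))).ncard ∧
      c A x = (A ∩ Set.Ico (p n) (p (n+1))).ncard) :
    ∀ h : ℕ → ℕ, (∃ A ∈ U, leU U (c A) h) ↔
      ((∃ A ∈ U, leU U (a A) h) ∧ (∃ A ∈ U, leU U (b A) h)) :=
  stmt16_general U p hp0 hpm a b c habc
end

section
/- Let U be a weakly Ramsey non-selective ultrafilter with witnessing interval partition P = ⟨[p_n, p_{n+1})⟩, and define σ : ℕ → ℕ by σ(x) = p_n + p_{n+1} − x − 1 for p_n ≤ x < p_{n+1}. Then σ is a bijection, and for every A ∈ U, a^A_P > b^A_P modulo U if and only if a^{σ[A]}_P < b^{σ[A]}_P modulo σ(U), where a^A_P(x) = |A ∩ [p_n, x)| and b^A_P(x) = |A ∩ [x, p_{n+1})|. -/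
lemma exists_interval (p : ℕ → ℕ) (hp0 : p 0 = 0) (hpm : StrictMono p) (x : ℕ) :
    ∃ n, p n ≤ x ∧ x < p (n+1) := by
  classical
  have h : ∃ k, x < p k := ⟨x+1, lt_of_lt_of_le (Nat.lt_succ_self x) hpm.le_apply⟩
  have hm : x < p (Nat.find h) := Nat.find_spec h
  have hm0 : Nat.find h ≠ 0 := by
    intro h0
    rw [h0, hp0] at hm; omega
  obtain ⟨n, hn⟩ := Nat.exists_eq_succ_of_ne_zero hm0
  rw [hn] at hm
  refine ⟨n, ?_, hm⟩
  by_contra hc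
  exact Nat.find_min h (m := n) (by omega) (by omega)

lemma ncard_Ico_left (A : Set ℕ) (x q : ℕ) (hx : x ∈ A) (hq : x < q) :
    (A ∩ Set.Ico x q).ncard = (A ∩ Set.Ico (x+1) q).ncard + 1 := by
  have hfin : (A ∩ Set.Ico (x+1) q).Finite := (Set.finite_Ico _ _).inter_of_right A
  have e : A ∩ Set.Ico x q = insert x (A ∩ Set.Ico (x+1) q) := by
    ext z
    simp only [Set.mem_inter_iff, Set.mem_Ico, Set.mem_insert_iff]
    constructor
    · rintro ⟨hz, h1, h2⟩
      rcases Nat.eq_or_lt_of_le h1 with h | h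
      · exact Or.inl h.symm
      · exact Or.inr ⟨hz, h, h2⟩
    · rintro (rfl | ⟨hz, h1, h2⟩)
      · exact ⟨hx, le_rfl, hq⟩
      · exact ⟨hz, by omega, h2⟩
  rw [e, Set.ncard_insert_of_notMem (fun h => absurd h.2.1 (by omega)) hfin]

lemma ncard_Ico_right (A : Set ℕ) (q x : ℕ) (hx : x ∈ A) (hq : q ≤ x) :
    (A ∩ Set.Ico q (x+1)).ncard = (A ∩ Set.Ico q x).ncard + 1 := by
  have hfin : (A ∩ Set.Ico q x).Finite := (Set.finite_Ico _ _).inter_of_right A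
  have e : A ∩ Set.Ico q (x+1) = insert x (A ∩ Set.Ico q x) := by
    ext z
    simp only [Set.mem_inter_iff, Set.mem_Ico, Set.mem_insert_iff]
    constructor
    · rintro ⟨hz, h1, h2⟩
      rcases Nat.eq_or_lt_of_le (Nat.lt_succ_iff.mp h2) with h | h
      · exact Or.inl h
      · exact Or.inr ⟨hz, h1, h⟩
    · rintro (rfl | ⟨hz, h1, h2⟩)
      · exact ⟨hx, hq, by omega⟩
      · exact ⟨hz, h1, by omega⟩
  rw [e, Set.ncard_insert_of_notMem (fun h => absurd h.2.2 (by omega)) hfin]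

theorem stmt19 (U : Ultrafilter ℕ) (hNP : Nonprincipal U) (hWR : WeaklyRamsey U)
    (p : ℕ → ℕ) (hp0 : p 0 = 0) (hpm : StrictMono p)
    (hsel : ¬ ∃ A ∈ U, ∀ n, (A ∩ Set.Ico (p n) (p (n+1))).Subsingleton)
    (a b : Set ℕ → ℕ → ℕ)
    (hab : ∀ (A : Set ℕ) (n x : ℕ), p n ≤ x → x < p (n+1) →
      a A x = (A ∩ Set.Ico (p n) x).ncard ∧ b A x = (A ∩ Set.Ico x (p (n+1))).ncard)
    (σ : ℕ → ℕ)
    (hσ : ∀ n x, p n ≤ x → x < p (n+1) → σ x = p n + p (n+1) - x - 1) :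
    Function.Bijective σ ∧
    ∀ A ∈ U, ({x | b A x < a A x} ∈ U ↔
      {x | a (σ '' A) x < b (σ '' A) x} ∈ Ultrafilter.map σ U) := by
  classical
  have hIv : ∀ x, ∃ n, p n ≤ x ∧ x < p (n+1) := exists_interval p hp0 hpm
  have hσmem : ∀ n x, p n ≤ x → x < p (n+1) → p n ≤ σ x ∧ σ x < p (n+1) := by
    intro n x h1 h2
    rw [hσ n x h1 h2]
    have := hpm (Nat.lt_succ_self n)
    omega
  have hσσ : ∀ x, σ (σ x) = x := by
    intro x
    obtain ⟨n, h1, h2⟩ := hIv x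
    obtain ⟨h3, h4⟩ := hσmem n x h1 h2
    rw [hσ n (σ x) h3 h4, hσ n x h1 h2]
    omega
  have hbij : Function.Bijective σ := Function.Involutive.bijective hσσ
  have huniq : ∀ n m x, p n ≤ x → x < p (n+1) → p m ≤ x → x < p (m+1) → n = m := by
    intro n m x h1 h2 h3 h4
    by_contra h
    rcases Nat.lt_or_ge n m with hlt | hge
    · have := hpm.monotone (show n+1 ≤ m by omega); omega
    · have := hpm.monotone (show m+1 ≤ n by omega); omega
  refine ⟨hbij, ?_⟩
  intro A hA
  -- image identities
  have himg1 : ∀ n x, p n ≤ x → x < p (n+1) →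
      σ '' A ∩ Set.Ico (p n) (σ x) = σ '' (A ∩ Set.Ico (x+1) (p (n+1))) := by
    intro n x h1 h2
    obtain ⟨g1, g2⟩ := hσmem n x h1 h2
    ext z
    constructor
    · rintro ⟨⟨y, hy, rfl⟩, hz1, hz2⟩
      obtain ⟨m, k1, k2⟩ := hIv y
      obtain ⟨k3, k4⟩ := hσmem m y k1 k2
      have hm : n = m := huniq n m (σ y) hz1 (lt_trans hz2 g2) k3 k4
      subst hm
      have e1 := hσ n y k1 k2
      have e2 := hσ n x h1 h2
      exact ⟨y, ⟨hy, by omega, k2⟩, rfl⟩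
    · rintro ⟨y, ⟨hy, hy1, hy2⟩, rfl⟩
      have k1 : p n ≤ y := by omega
      obtain ⟨k3, k4⟩ := hσmem n y k1 hy2
      refine ⟨⟨y, hy, rfl⟩, k3, ?_⟩
      rw [hσ n y k1 hy2, hσ n x h1 h2]
      omega
  have himg2 : ∀ n x, p n ≤ x → x < p (n+1) →
      σ '' A ∩ Set.Ico (σ x) (p (n+1)) = σ '' (A ∩ Set.Ico (p n) (x+1)) := by
    intro n x h1 h2
    obtain ⟨g1, g2⟩ := hσmem n x h1 h2
    ext z
    constructor
    · rintro ⟨⟨y, hy, rfl⟩, hz1, hz2⟩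
      obtain ⟨m, k1, k2⟩ := hIv y
      obtain ⟨k3, k4⟩ := hσmem m y k1 k2
      have hm : n = m := huniq n m (σ y) (le_trans g1 hz1) hz2 k3 k4
      subst hm
      have e1 := hσ n y k1 k2
      have e2 := hσ n x h1 h2
      exact ⟨y, ⟨hy, k1, by omega⟩, rfl⟩
    · rintro ⟨y, ⟨hy, hy1, hy2⟩, rfl⟩
      have k2 : y < p (n+1) := by omega
      obtain ⟨k3, k4⟩ := hσmem n y hy1 k2
      refine ⟨⟨y, hy, rfl⟩, ?_, k4⟩
      rw [hσ n y hy1 k2, hσ n x h1 h2]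
      omega
  have hcomp : ∀ x n, p n ≤ x → x < p (n+1) →
      a (σ '' A) (σ x) = (A ∩ Set.Ico (x+1) (p (n+1))).ncard ∧
      b (σ '' A) (σ x) = (A ∩ Set.Ico (p n) (x+1)).ncard := by
    intro x n h1 h2
    obtain ⟨g1, g2⟩ := hσmem n x h1 h2
    obtain ⟨ha, hb⟩ := hab (σ '' A) n (σ x) g1 g2
    rw [ha, hb, himg1 n x h1 h2, himg2 n x h1 h2,
      Set.ncard_image_of_injective _ hbij.injective,
      Set.ncard_image_of_injective _ hbij.injective]
    exact ⟨rfl, rfl⟩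
  rw [Ultrafilter.mem_map]
  have hpre : σ ⁻¹' {x | a (σ '' A) x < b (σ '' A) x}
      = {x | a (σ '' A) (σ x) < b (σ '' A) (σ x)} := rfl
  rw [hpre]
  constructor
  · intro hS1
    refine U.toFilter.mem_of_superset hS1 ?_
    intro x hx
    obtain ⟨n, h1, h2⟩ := hIv x
    obtain ⟨ha, hb⟩ := hab A n x h1 h2
    obtain ⟨ha', hb'⟩ := hcomp x n h1 h2
    simp only [Set.mem_setOf_eq] at hx ⊢
    rw [ha, hb] at hx
    rw [ha', hb']
    have m1 : (A ∩ Set.Ico (x+1) (p (n+1))).ncard ≤ (A ∩ Set.Ico x (p (n+1))).ncard :=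
      Set.ncard_le_ncard (Set.inter_subset_inter_right A (Set.Ico_subset_Ico (by omega) le_rfl))
        ((Set.finite_Ico _ _).inter_of_right A)
    have m2 : (A ∩ Set.Ico (p n) x).ncard ≤ (A ∩ Set.Ico (p n) (x+1)).ncard :=
      Set.ncard_le_ncard (Set.inter_subset_inter_right A (Set.Ico_subset_Ico le_rfl (by omega)))
        ((Set.finite_Ico _ _).inter_of_right A)
    omega
  · intro hS2
    by_contra hS1
    have hS1c : {x | ¬ b A x < a A x} ∈ U := by
      have := (Ultrafilter.compl_mem_iff_notMem (s := {x | b A x < a A x})).mpr hS1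
      simpa [Set.compl_setOf] using this
    set B : Set ℕ := A ∩ {x | a (σ '' A) (σ x) < b (σ '' A) (σ x)} ∩ {x | ¬ b A x < a A x}
      with hB
    have hBU : B ∈ U := Filter.inter_mem (Filter.inter_mem hA hS2) hS1c
    have hcond : ∀ n, ∀ z ∈ B ∩ Set.Ico (p n) (p (n+1)),
        (A ∩ Set.Ico (z+1) (p (n+1))).ncard ≤ (A ∩ Set.Ico (p n) z).ncard ∧
        (A ∩ Set.Ico (p n) z).ncard ≤ (A ∩ Set.Ico (z+1) (p (n+1))).ncard + 1 := by
      rintro n z ⟨⟨⟨hzA, hz2⟩, hz1⟩, k1, k2⟩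
      obtain ⟨ha, hb⟩ := hab A n z k1 k2
      obtain ⟨ha', hb'⟩ := hcomp z n k1 k2
      simp only [Set.mem_setOf_eq] at hz1 hz2
      rw [ha', hb', ncard_Ico_right A (p n) z hzA k1] at hz2
      rw [ha, hb, ncard_Ico_left A z (p (n+1)) hzA k2] at hz1
      omega
    refine hsel ⟨B, hBU, ?_⟩
    intro n x hx y hy
    by_contra hne
    -- wlog x < y
    have key : ∀ u v, u ∈ B ∩ Set.Ico (p n) (p (n+1)) → v ∈ B ∩ Set.Ico (p n) (p (n+1)) →
        u < v → False := by
      intro u v hu hv huv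
      obtain ⟨c1, c2⟩ := hcond n u hu
      obtain ⟨c3, c4⟩ := hcond n v hv
      have huA : u ∈ A := hu.1.1.1
      have hvA : v ∈ A := hv.1.1.1
      have hu1 : p n ≤ u := hu.2.1
      have hv2 : v < p (n+1) := hv.2.2
      have m1 : (A ∩ Set.Ico (p n) (u+1)).ncard ≤ (A ∩ Set.Ico (p n) v).ncard :=
        Set.ncard_le_ncard (Set.inter_subset_inter_right A (Set.Ico_subset_Ico le_rfl (by omega)))
          ((Set.finite_Ico _ _).inter_of_right A)
      have m2 : (A ∩ Set.Ico v (p (n+1))).ncard ≤ (A ∩ Set.Ico (u+1) (p (n+1))).ncard :=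
        Set.ncard_le_ncard (Set.inter_subset_inter_right A (Set.Ico_subset_Ico (by omega) le_rfl))
          ((Set.finite_Ico _ _).inter_of_right A)
      rw [ncard_Ico_right A (p n) u huA hu1] at m1
      rw [ncard_Ico_left A v (p (n+1)) hvA hv2] at m2
      omega
    rcases Nat.lt_trichotomy x y with h | h | h
    · exact key x y hx hy h
    · exact hne h
    · exact key y x hy hx h
end
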